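/- arXiv:1902.10334 — 10 statements merged into one kernel-verified Lean document; each statement's English description precedes it below -/
import Mathlib

section
/- Let M be the 4-cycle graph with its graph metric and vertices x₁, x₂, x₃, x₄ in cyclic order. Then the nonzero function f = 1_{x₁} - 1_{x₂} + 1_{x₃} - 1_{x₄} satisfies ‖f‖_DP = 0; in particular, the double-point seminorm on TP(M) is not a norm. -/
/-- If `M` is the 4-cycle with its graph metric (vertices `x 0, x 1, x 2, x 3`
in cyclic order, adjacent distances `1`, diagonal distances `2`), then the nonzero function
`f = 𝟙_{x₁} - 𝟙_{x₂} + 𝟙_{x₃} - 𝟙_{x₄}` has double-point seminorm zero; in particular the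
double-point seminorm on `TP(M)` is not a norm. -/
theorem stmt4 {M : Type*} [MetricSpace M] (x : Fin 4 → M)
    (hinj : Function.Injective x) (hsurj : ∀ m : M, ∃ i, m = x i)
    (hadj : ∀ i : Fin 4, dist (x i) (x (i + 1)) = 1)
    (hdiag02 : dist (x 0) (x 2) = 2) (hdiag13 : dist (x 1) (x 3) = 2) :
    (Finsupp.single (x 0) (1 : ℝ) - Finsupp.single (x 1) 1 + Finsupp.single (x 2) 1 -
        Finsupp.single (x 3) 1) ≠ 0 ∧
    sSup {r : ℝ | ∃ u v : M,
        r = |(Finsupp.single (x 0) (1 : ℝ) - Finsupp.single (x 1) 1 +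
              Finsupp.single (x 2) 1 - Finsupp.single (x 3) 1).sum
              fun y a => ((dist v y - dist u y) / 2) * a|} = 0 := by
  have d01 : dist (x 0) (x 1) = 1 := hadj 0
  have d12 : dist (x 1) (x 2) = 1 := hadj 1
  have d23 : dist (x 2) (x 3) = 1 := hadj 2
  have d30 : dist (x 3) (x 0) = 1 := hadj 3
  have d10 : dist (x 1) (x 0) = 1 := by rw [dist_comm]; exact d01
  have d21 : dist (x 2) (x 1) = 1 := by rw [dist_comm]; exact d12
  have d32 : dist (x 3) (x 2) = 1 := by rw [dist_comm]; exact d23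
  have d03 : dist (x 0) (x 3) = 1 := by rw [dist_comm]; exact d30
  have d20 : dist (x 2) (x 0) = 2 := by rw [dist_comm]; exact hdiag02
  have d31 : dist (x 3) (x 1) = 2 := by rw [dist_comm]; exact hdiag13
  have key : ∀ i : Fin 4,
      dist (x i) (x 0) - dist (x i) (x 1) + dist (x i) (x 2) - dist (x i) (x 3) = 0 := by
    intro i
    fin_cases i
    · show dist (x 0) (x 0) - dist (x 0) (x 1) + dist (x 0) (x 2) - dist (x 0) (x 3) = 0
      simp only [dist_self]; linarith
    · show dist (x 1) (x 0) - dist (x 1) (x 1) + dist (x 1) (x 2) - dist (x 1) (x 3) = 0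
      simp only [dist_self]; linarith
    · show dist (x 2) (x 0) - dist (x 2) (x 1) + dist (x 2) (x 2) - dist (x 2) (x 3) = 0
      simp only [dist_self]; linarith
    · show dist (x 3) (x 0) - dist (x 3) (x 1) + dist (x 3) (x 2) - dist (x 3) (x 3) = 0
      simp only [dist_self]; linarith
  have hsum : ∀ u v : M,
      (Finsupp.single (x 0) (1 : ℝ) - Finsupp.single (x 1) 1 +
        Finsupp.single (x 2) 1 - Finsupp.single (x 3) 1).sum
        (fun y a => ((dist v y - dist u y) / 2) * a) = 0 := by
    intro u v
    obtain ⟨i, rfl⟩ := hsurj u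
    obtain ⟨j, rfl⟩ := hsurj v
    have hz : ∀ y : M, ((dist (x j) y - dist (x i) y) / 2) * (0 : ℝ) = 0 := by
      intro y; ring
    have hsub : ∀ (y : M) (b₁ b₂ : ℝ),
        ((dist (x j) y - dist (x i) y) / 2) * (b₁ - b₂) =
        ((dist (x j) y - dist (x i) y) / 2) * b₁ -
        ((dist (x j) y - dist (x i) y) / 2) * b₂ := by
      intro y b₁ b₂; ring
    have hadd : ∀ (y : M) (b₁ b₂ : ℝ),
        ((dist (x j) y - dist (x i) y) / 2) * (b₁ + b₂) =
        ((dist (x j) y - dist (x i) y) / 2) * b₁ +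
        ((dist (x j) y - dist (x i) y) / 2) * b₂ := by
      intro y b₁ b₂; ring
    have single_sum : ∀ (m : M) (c : ℝ),
        (Finsupp.single m c).sum (fun y a => ((dist (x j) y - dist (x i) y) / 2) * a) =
        ((dist (x j) m - dist (x i) m) / 2) * c :=
      fun m c => Finsupp.sum_single_index (mul_zero _)
    rw [Finsupp.sum_sub_index hsub, Finsupp.sum_add_index' hz hadd,
      Finsupp.sum_sub_index hsub, single_sum, single_sum, single_sum, single_sum]
    have ki := key i
    have kj := key j
    ring_nf
    linarith
  constructor
  · intro h
    have h10 : x 1 ≠ x 0 := hinj.ne (by decide)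
    have h20 : x 2 ≠ x 0 := hinj.ne (by decide)
    have h30 : x 3 ≠ x 0 := hinj.ne (by decide)
    have := DFunLike.congr_fun h (x 0)
    simp [Finsupp.single_apply, h10, h20, h30] at this
  · have hset : {r : ℝ | ∃ u v : M,
        r = |(Finsupp.single (x 0) (1 : ℝ) - Finsupp.single (x 1) 1 +
              Finsupp.single (x 2) 1 - Finsupp.single (x 3) 1).sum
              fun y a => ((dist v y - dist u y) / 2) * a|} = {0} := by
      ext r
      simp only [Set.mem_setOf_eq, Set.mem_singleton_iff]
      constructor
      · rintro ⟨u, v, rfl⟩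
        rw [hsum u v, abs_zero]
      · rintro rfl
        exact ⟨x 0, x 0, by rw [hsum, abs_zero]⟩
    rw [hset, csSup_singleton]
end

section
/- Suppose a metric space M contains points x₁,x₂,x₃,x₄ with d(x₁,x₂)=d(x₂,x₃)=d(x₃,x₄)=d(x₄,x₁), d(x₁,x₃)=d(x₂,x₄)=2d(x₁,x₂), and such that for every x ∈ M, d(x,x₁)+d(x,x₃)=d(x,x₂)+d(x,x₄). Then f = 1_{x₁} - 1_{x₂} + 1_{x₃} - 1_{x₄} is a nonzero element of TP(M) with ‖f‖_DP = 0. -/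
lemma sum_lin {M : Type*} [DecidableEq M] (x₁ x₂ x₃ x₄ : M) (c : M → ℝ) :
    ((Finsupp.single x₁ (1:ℝ) - Finsupp.single x₂ 1 + Finsupp.single x₃ 1 -
      Finsupp.single x₄ 1).sum fun y a => c y * a) = c x₁ - c x₂ + c x₃ - c x₄ := by
  rw [Finsupp.sum_sub_index (by intros; ring), Finsupp.sum_add_index (by simp) (by intros; ring),
    Finsupp.sum_sub_index (by intros; ring)]
  simp [Finsupp.sum_single_index]

/-- If a metric space `M` contains pairwise distinct points `x₁, x₂, x₃, x₄`
with equal "side" distances, diagonals twice the side, and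
`d(x,x₁) + d(x,x₃) = d(x,x₂) + d(x,x₄)` for all `x ∈ M`, then
`f = 𝟙_{x₁} - 𝟙_{x₂} + 𝟙_{x₃} - 𝟙_{x₄}` is a nonzero element of `TP(M)` with `‖f‖_DP = 0`. -/
theorem stmt5 {M : Type*} [MetricSpace M] (x₁ x₂ x₃ x₄ : M)
    (h12 : x₁ ≠ x₂) (h13 : x₁ ≠ x₃) (h14 : x₁ ≠ x₄)
    (h23 : x₂ ≠ x₃) (h24 : x₂ ≠ x₄) (h34 : x₃ ≠ x₄)
    (hside : dist x₁ x₂ = dist x₂ x₃ ∧ dist x₂ x₃ = dist x₃ x₄ ∧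
      dist x₃ x₄ = dist x₄ x₁)
    (hdiag : dist x₁ x₃ = 2 * dist x₁ x₂ ∧ dist x₂ x₄ = 2 * dist x₁ x₂)
    (hbal : ∀ x : M, dist x x₁ + dist x x₃ = dist x x₂ + dist x x₄) :
    (Finsupp.single x₁ (1 : ℝ) - Finsupp.single x₂ 1 + Finsupp.single x₃ 1 -
        Finsupp.single x₄ 1) ≠ 0 ∧
    ((Finsupp.single x₁ (1 : ℝ) - Finsupp.single x₂ 1 + Finsupp.single x₃ 1 -
        Finsupp.single x₄ 1).sum fun _ r => r) = 0 ∧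
    sSup {r : ℝ | ∃ u v : M,
        r = |(Finsupp.single x₁ (1 : ℝ) - Finsupp.single x₂ 1 +
              Finsupp.single x₃ 1 - Finsupp.single x₄ 1).sum
              fun y a => ((dist v y - dist u y) / 2) * a|} = 0 := by
  classical
  refine ⟨?_, ?_, ?_⟩
  · intro h
    have := DFunLike.congr_fun h x₁
    simp [Finsupp.single_apply, h12.symm, h13.symm, h14.symm, h12, h13, h14] at this
  · have := sum_lin x₁ x₂ x₃ x₄ (fun _ => (1:ℝ))
    simpa using this
  · have hval : ∀ u v : M,
        ((Finsupp.single x₁ (1:ℝ) - Finsupp.single x₂ 1 + Finsupp.single x₃ 1 -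
          Finsupp.single x₄ 1).sum fun y a => ((dist v y - dist u y) / 2) * a) = 0 := by
      intro u v
      rw [sum_lin x₁ x₂ x₃ x₄ (fun y => (dist v y - dist u y) / 2)]
      have hu := hbal u
      have hv := hbal v
      ring_nf
      linarith
    have : {r : ℝ | ∃ u v : M,
        r = |(Finsupp.single x₁ (1:ℝ) - Finsupp.single x₂ 1 + Finsupp.single x₃ 1 -
          Finsupp.single x₄ 1).sum fun y a => ((dist v y - dist u y) / 2) * a|} = {0} := by
      ext r
      constructor
      · rintro ⟨u, v, rfl⟩
        simp [hval u v]
      · rintro rfl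
        exact ⟨x₁, x₁, by simp [hval x₁ x₁]⟩
    rw [this, csSup_singleton]
end

section
/- Fix an integer m ≥ 2 and real c > 0, and set a = (m/(m-1))·c. Let M = A ⊔ B with |A| = |B| = m, endowed with d(x,y) = 0 if x = y, d(x,y) = a if x ≠ y lie both in A or both in B, and d(x,y) = c if one lies in A and the other in B. Then d is a metric on M, and the nonzero function f = 1_A - 1_B ∈ TP(M) satisfies ∑_{x∈M} f(x) d(v,x) = 0 for every v ∈ M, hence ‖f‖_DP = 0. -/
/-- For `m ≥ 2`, `c > 0` and `a = (m/(m-1))·c`, the two-level distance on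
`M = A ⊔ B` (`|A| = |B| = m`, distance `a` within each part, `c` across) is a metric, the
nonzero function `f = 𝟙_A - 𝟙_B` has zero sum, satisfies `∑_x f(x) d(v,x) = 0` for all
`v ∈ M`, and hence has double-point seminorm zero. -/
theorem stmt6 (m : ℕ) (hm : 2 ≤ m) (c : ℝ) (hc : 0 < c) :
    let a : ℝ := ((m : ℝ) / ((m : ℝ) - 1)) * c
    let D : (Fin m ⊕ Fin m) → (Fin m ⊕ Fin m) → ℝ := fun x y =>
      if x = y then 0 else
        match x, y with
        | Sum.inl _, Sum.inl _ => a
        | Sum.inr _, Sum.inr _ => a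
        | _, _ => c
    let f : (Fin m ⊕ Fin m) → ℝ := Sum.elim (fun _ => 1) (fun _ => -1)
    (∀ x, D x x = 0) ∧ (∀ x y, D x y = 0 → x = y) ∧ (∀ x y, D x y = D y x) ∧
    (∀ x y z, D x z ≤ D x y + D y z) ∧
    f ≠ 0 ∧ (∑ x, f x) = 0 ∧
    (∀ v, ∑ x, f x * D v x = 0) ∧
    sSup {r : ℝ | ∃ u v, r = |∑ x, ((D v x - D u x) / 2) * f x|} = 0 := by
  intro a D f
  have hm2 : (2:ℝ) ≤ (m:ℝ) := by exact_mod_cast hm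
  have hm1 : (1:ℝ) ≤ (m:ℝ) - 1 := by linarith
  have hm1pos : (0:ℝ) < (m:ℝ) - 1 := by linarith
  have hca : c ≤ a := by
    have : (1:ℝ) ≤ (m:ℝ) / ((m:ℝ) - 1) := (le_div_iff₀ hm1pos).2 (by linarith)
    calc c = 1 * c := (one_mul c).symm
      _ ≤ ((m:ℝ) / ((m:ℝ) - 1)) * c := by
        exact mul_le_mul_of_nonneg_right this hc.le
  have hapos : 0 < a := lt_of_lt_of_le hc hca
  have ha2c : a ≤ 2 * c := by
    have h1 : (m:ℝ) / ((m:ℝ) - 1) ≤ 2 := (div_le_iff₀ hm1pos).2 (by linarith)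
    calc a = ((m:ℝ) / ((m:ℝ) - 1)) * c := rfl
      _ ≤ 2 * c := mul_le_mul_of_nonneg_right h1 hc.le
  have hkey : ((m:ℝ) - 1) * a = (m:ℝ) * c := by
    show ((m:ℝ) - 1) * (((m:ℝ) / ((m:ℝ) - 1)) * c) = (m:ℝ) * c
    field_simp
  -- basic properties of D
  have hDself : ∀ x, D x x = 0 := by intro x; simp [D]
  have hDge : ∀ x y, x ≠ y → c ≤ D x y := by
    intro x y hxy
    cases x <;> cases y <;> simp [D, hxy] <;> first | exact hca | rfl
  have hDle : ∀ x y, D x y ≤ a := by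
    intro x y
    by_cases hxy : x = y
    · simp [hxy, hDself, hapos.le]
    · cases x <;> cases y <;> simp [D, hxy] <;> first | exact hca | rfl
  have hDeq : ∀ x y, D x y = 0 → x = y := by
    intro x y h
    by_contra hxy
    have := hDge x y hxy
    linarith
  have hDsymm : ∀ x y, D x y = D y x := by
    intro x y
    by_cases hxy : x = y
    · rw [hxy]
    · cases x <;> cases y <;> simp [D, hxy, Ne.symm hxy]
  have htri : ∀ x y z, D x z ≤ D x y + D y z := by
    intro x y z
    by_cases hxy : x = y
    · subst hxy; rw [hDself]; linarith
    by_cases hyz : y = z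
    · subst hyz; rw [hDself]; linarith
    have h1 := hDge x y hxy
    have h2 := hDge y z hyz
    have h3 := hDle x z
    linarith
  -- f ≠ 0
  have hmpos : 0 < m := by omega
  have hfne : f ≠ 0 := by
    intro h
    have := congrFun h (Sum.inl ⟨0, hmpos⟩)
    simp [f] at this
  -- sum of f
  have hfsum : (∑ x, f x) = 0 := by
    rw [Fintype.sum_sum_type]
    simp [f]
  -- key sum
  have hsum : ∀ v, ∑ x, f x * D v x = 0 := by
    intro v
    have hA : ∀ (i : Fin m), (∑ j, D (Sum.inl i) (Sum.inl j)) = ((m:ℝ) - 1) * a := by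
      intro i
      have : ∀ j : Fin m, D (Sum.inl i) (Sum.inl j) = a - (if i = j then a else 0) := by
        intro j
        by_cases h : i = j <;> simp [D, h]
      rw [Finset.sum_congr rfl (fun j _ => this j), Finset.sum_sub_distrib]
      simp [Finset.sum_ite_eq]
      ring
    have hB : ∀ (i : Fin m), (∑ j, D (Sum.inr i) (Sum.inr j)) = ((m:ℝ) - 1) * a := by
      intro i
      have : ∀ j : Fin m, D (Sum.inr i) (Sum.inr j) = a - (if i = j then a else 0) := by
        intro j
        by_cases h : i = j <;> simp [D, h]
      rw [Finset.sum_congr rfl (fun j _ => this j), Finset.sum_sub_distrib]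
      simp [Finset.sum_ite_eq]
      ring
    cases v with
    | inl i =>
        rw [Fintype.sum_sum_type]
        have h1 : (∑ j, f (Sum.inl j) * D (Sum.inl i) (Sum.inl j)) = ((m:ℝ) - 1) * a := by
          simp only [f, Sum.elim_inl, one_mul]; exact hA i
        have h2 : (∑ j, f (Sum.inr j) * D (Sum.inl i) (Sum.inr j)) = -((m:ℝ) * c) := by
          have : ∀ j : Fin m, f (Sum.inr j) * D (Sum.inl i) (Sum.inr j) = -c := by
            intro j; simp [f, D]
          rw [Finset.sum_congr rfl (fun j _ => this j)]
          simp [mul_comm]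
        rw [h1, h2, hkey]; ring
    | inr i =>
        rw [Fintype.sum_sum_type]
        have h1 : (∑ j, f (Sum.inl j) * D (Sum.inr i) (Sum.inl j)) = (m:ℝ) * c := by
          have : ∀ j : Fin m, f (Sum.inl j) * D (Sum.inr i) (Sum.inl j) = c := by
            intro j; simp [f, D]
          rw [Finset.sum_congr rfl (fun j _ => this j)]
          simp [mul_comm]
        have h2 : (∑ j, f (Sum.inr j) * D (Sum.inr i) (Sum.inr j)) = -(((m:ℝ) - 1) * a) := by
          have : ∀ j : Fin m, f (Sum.inr j) * D (Sum.inr i) (Sum.inr j)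
              = -(D (Sum.inr i) (Sum.inr j)) := by
            intro j; simp [f]
          rw [Finset.sum_congr rfl (fun j _ => this j), Finset.sum_neg_distrib, hB i]
        rw [h1, h2, hkey]; ring
  refine ⟨hDself, hDeq, hDsymm, htri, hfne, hfsum, hsum, ?_⟩
  have hset : {r : ℝ | ∃ u v, r = |∑ x, ((D v x - D u x) / 2) * f x|} = {0} := by
    ext r
    simp only [Set.mem_setOf_eq, Set.mem_singleton_iff]
    constructor
    · rintro ⟨u, v, rfl⟩
      have : ∀ x, ((D v x - D u x) / 2) * f x
          = (f x * D v x) / 2 - (f x * D u x) / 2 := by intro x; ring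
      rw [Finset.sum_congr rfl (fun x _ => this x), Finset.sum_sub_distrib,
        ← Finset.sum_div, ← Finset.sum_div, hsum v, hsum u]
      simp
    · rintro rfl
      refine ⟨Sum.inl ⟨0, hmpos⟩, Sum.inl ⟨0, hmpos⟩, ?_⟩
      simp
  rw [hset]
  exact csSup_singleton 0
end

section
/- Let M = {x₁,...,x_n} ⊂ ℝ with x₁ < x₂ < ... < x_n, with metric induced from ℝ. Let l be any 1-Lipschitz function on M with |l(x₁) - l(x_n)| = x_n - x₁. Then |l(x_i) - l(x_j)| = |x_i - x_j| for all i, j; in particular the singleton set K = {l} satisfies conditions A and B, and ‖·‖_{K} is the smallest seminorm of the form ‖·‖_{K'} over all K' satisfying conditions A and B. -/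
private lemma key_aux (n : ℕ) (x h : Fin (n + 1) → ℝ) (hx : Monotone x)
    (hl : ∀ i j, |h i - h j| ≤ |x i - x j|)
    (he : h (Fin.last n) - h 0 = x (Fin.last n) - x 0) :
    ∀ i, h i - h 0 = x i - x 0 := by
  intro i
  have hx0 : |x i - x 0| = x i - x 0 := abs_of_nonneg (sub_nonneg.2 (hx (Fin.zero_le i)))
  have hxl : |x (Fin.last n) - x i| = x (Fin.last n) - x i :=
    abs_of_nonneg (sub_nonneg.2 (hx (Fin.le_last i)))
  have h1 := (hl i 0).trans_eq hx0
  have h2 := (hl (Fin.last n) i).trans_eq hxl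
  have a1 := le_abs_self (h i - h 0)
  have a2 := le_abs_self (h (Fin.last n) - h i)
  linarith

private lemma key_dich (n : ℕ) (x h : Fin (n + 1) → ℝ) (hx : Monotone x)
    (hl : ∀ i j, |h i - h j| ≤ |x i - x j|)
    (he : |h 0 - h (Fin.last n)| = x (Fin.last n) - x 0) :
    (∀ i, h i - h 0 = x i - x 0) ∨ (∀ i, h i - h 0 = x 0 - x i) := by
  rcases abs_eq (sub_nonneg.2 (hx (Fin.zero_le (Fin.last n)))) |>.1 he with hc | hc
  · right
    have := key_aux n x (fun i => -h i) hx (fun i j => by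
      rw [show -h i - -h j = -(h i - h j) by ring, abs_neg]; exact hl i j)
      (show -h (Fin.last n) - -h 0 = x (Fin.last n) - x 0 by simp; linarith)
    intro i; have h2 := this i; simp at h2; linarith
  · left
    exact key_aux n x h hx hl (by linarith)

private lemma sum_eq (n : ℕ) (x h : Fin (n + 1) → ℝ) (f : Fin (n + 1) → ℝ)
    (hf : ∑ i, f i = 0) (he : ∀ i, h i - h 0 = x i - x 0) :
    ∑ i, h i * f i = ∑ i, (x i - x 0) * f i := by
  have : ∀ i, h i * f i = (x i - x 0) * f i + h 0 * f i := by
    intro i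
    have hi : h i = x i - x 0 + h 0 := by linarith [he i]
    rw [hi]; ring
  rw [Finset.sum_congr rfl (fun i _ => this i), Finset.sum_add_distrib, ← Finset.mul_sum, hf,
    mul_zero, add_zero]

private lemma abs_sum_eq (n : ℕ) (x h : Fin (n + 1) → ℝ) (f : Fin (n + 1) → ℝ)
    (hf : ∑ i, f i = 0)
    (he : (∀ i, h i - h 0 = x i - x 0) ∨ (∀ i, h i - h 0 = x 0 - x i)) :
    |∑ i, h i * f i| = |∑ i, (x i - x 0) * f i| := by
  rcases he with he | he
  · rw [sum_eq n x h f hf he]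
  · have := sum_eq n x (fun i => -h i) f hf (fun i => by have := he i; simp; linarith)
    have h2 : ∑ i, h i * f i = -∑ i, (x i - x 0) * f i := by
      rw [← this, ← Finset.sum_neg_distrib]
      exact Finset.sum_congr rfl (fun i _ => by ring)
    rw [h2, abs_neg]

/-- Let `M = {x 0 < x 1 < ... < x n} ⊂ ℝ` with the induced metric and let
`l` be 1-Lipschitz on `M` with `|l(x 0) - l(x n)| = x n - x 0`. Then
`|l(x i) - l(x j)| = |x i - x j|` for all `i, j` (so `K = {l}` satisfies conditions A and
B), and `‖·‖_{{l}}` is the smallest seminorm of the form `‖·‖_{K'}` over all `K'`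
satisfying conditions A and B. -/
theorem stmt11 (n : ℕ) (x : Fin (n + 1) → ℝ) (hx : StrictMono x)
    (l : Fin (n + 1) → ℝ) (hl : ∀ i j, |l i - l j| ≤ |x i - x j|)
    (hend : |l 0 - l (Fin.last n)| = x (Fin.last n) - x 0) :
    (∀ i j, |l i - l j| = |x i - x j|) ∧
    (∀ K : Set (Fin (n + 1) → ℝ),
      (∀ g ∈ K, ∀ i j, |g i - g j| ≤ |x i - x j|) →
      (∀ i j, ∃ g ∈ K, |g i - g j| = |x i - x j|) →
      ∀ f : Fin (n + 1) → ℝ, (∑ i, f i) = 0 →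
        |∑ i, l i * f i| ≤ sSup {r : ℝ | ∃ g ∈ K, r = |∑ i, g i * f i|}) := by
  have hlm : Monotone x := hx.monotone
  have hEl := key_dich n x l hlm hl hend
  constructor
  · intro i j
    rcases hEl with he | he
    · have hi := he i; have hj := he j
      have : l i - l j = x i - x j := by linarith
      rw [this]
    · have hi := he i; have hj := he j
      have : l i - l j = x j - x i := by linarith
      rw [this, abs_sub_comm]
  · intro K hA hB f hf
    obtain ⟨g, hgK, hg⟩ := hB 0 (Fin.last n)
    have hxe : |x 0 - x (Fin.last n)| = x (Fin.last n) - x 0 := by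
      rw [abs_sub_comm]
      exact abs_of_nonneg (sub_nonneg.2 (hlm (Fin.zero_le _)))
    have hEg := key_dich n x g hlm (hA g hgK) (hg.trans hxe)
    have hleq := abs_sum_eq n x l f hf hEl
    have hgeq := abs_sum_eq n x g f hf hEg
    have hmem : |∑ i, g i * f i| ∈ {r : ℝ | ∃ g ∈ K, r = |∑ i, g i * f i|} :=
      ⟨g, hgK, rfl⟩
    have hbdd : BddAbove {r : ℝ | ∃ g ∈ K, r = |∑ i, g i * f i|} := by
      refine ⟨∑ i, |x i - x 0| * |f i|, ?_⟩
      rintro r ⟨g', hg', rfl⟩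
      have hs : ∑ i, g' i * f i = ∑ i, (g' i - g' 0) * f i := by
        have : ∀ i, g' i * f i = (g' i - g' 0) * f i + g' 0 * f i := fun i => by ring
        rw [Finset.sum_congr rfl (fun i _ => this i), Finset.sum_add_distrib,
          ← Finset.mul_sum, hf, mul_zero, add_zero]
      rw [hs]
      calc |∑ i, (g' i - g' 0) * f i| ≤ ∑ i, |(g' i - g' 0) * f i| :=
            Finset.abs_sum_le_sum_abs _ _
        _ ≤ ∑ i, |x i - x 0| * |f i| := by
            refine Finset.sum_le_sum (fun i _ => ?_)
            rw [abs_mul]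
            exact mul_le_mul_of_nonneg_right (hA g' hg' i 0) (abs_nonneg _)
    calc |∑ i, l i * f i| = |∑ i, g i * f i| := by rw [hleq, hgeq]
      _ ≤ _ := le_csSup hbdd hmem
end

section
/- Let M = {a,b,c} be the equilateral metric space with all pairwise distances equal to 1. Let K₁ = {d(·,a), d(·,b)} and K₂ = {d(·,b), d(·,c)}. Then ‖2·1_a - 1_b - 1_c‖_{K₂} = 1 and ‖1_a + 1_b - 2·1_c‖_{K₁} = 1, while ‖3(1_a - 1_c)‖_K = 3 for every set K of 1-Lipschitz functions satisfying condition B. Consequently, the pointwise infimum over all K satisfying conditions A and B of the seminorms ‖·‖_K fails the triangle inequality, hence is not a seminorm on TP(M). -/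
/-- On the three-point equilateral space `M = {a,b,c}` (all distances `1`),
with `K₁ = {d(·,a), d(·,b)}`, `K₂ = {d(·,b), d(·,c)}`, one has
`‖2·𝟙_a - 𝟙_b - 𝟙_c‖_{K₂} = 1`, `‖𝟙_a + 𝟙_b - 2·𝟙_c‖_{K₁} = 1`, while
`‖3(𝟙_a - 𝟙_c)‖_K = 3` for every set `K` of 1-Lipschitz functions satisfying condition B.
Consequently the pointwise infimum over all `K` satisfying conditions A and B of the
seminorms `‖·‖_K` fails the triangle inequality. -/
theorem stmt12 {M : Type*} [MetricSpace M] [Fintype M] [DecidableEq M]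
    (a b c : M) (hab : a ≠ b) (hbc : b ≠ c) (hac : a ≠ c)
    (dab : dist a b = 1) (dbc : dist b c = 1) (dac : dist a c = 1)
    (hall : ∀ m : M, m = a ∨ m = b ∨ m = c) :
    let f₁ : M → ℝ := fun m =>
      (if m = a then 2 else 0) - (if m = b then 1 else 0) - (if m = c then 1 else 0)
    let f₂ : M → ℝ := fun m =>
      (if m = a then 1 else 0) + (if m = b then 1 else 0) - (if m = c then 2 else 0)
    let nK : Set (M → ℝ) → (M → ℝ) → ℝ := fun K f =>
      sSup {r : ℝ | ∃ g ∈ K, r = |∑ m, g m * f m|}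
    let condA : Set (M → ℝ) → Prop := fun K => ∀ g ∈ K, LipschitzWith 1 g
    let condB : Set (M → ℝ) → Prop := fun K => ∀ u v : M, ∃ g ∈ K, |g u - g v| = dist u v
    let N : (M → ℝ) → ℝ := fun f => sInf {r : ℝ | ∃ K, condA K ∧ condB K ∧ r = nK K f}
    nK {fun m => dist m b, fun m => dist m c} f₁ = 1 ∧
    nK {fun m => dist m a, fun m => dist m b} f₂ = 1 ∧
    (∀ K, condA K → condB K → nK K (f₁ + f₂) = 3) ∧
    ¬ N (f₁ + f₂) ≤ N f₁ + N f₂ := by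
  intro f₁ f₂ nK condA condB N
  have hba := hab.symm
  have hcb := hbc.symm
  have hca := hac.symm
  have dba : dist b a = 1 := by rw [dist_comm]; exact dab
  have dcb : dist c b = 1 := by rw [dist_comm]; exact dbc
  have dca : dist c a = 1 := by rw [dist_comm]; exact dac
  have huniv : ({a, b, c} : Finset M) = Finset.univ :=
    Finset.eq_univ_of_forall (fun m => by rcases hall m with h | h | h <;> simp [h])
  have sum3 : ∀ F : M → ℝ, ∑ m, F m = F a + F b + F c := by
    intro F
    rw [← huniv, Finset.sum_insert (by simp [hab, hac]),
      Finset.sum_insert (by simp [hbc]), Finset.sum_singleton, add_assoc]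
  have hf₁ : f₁ a = 2 ∧ f₁ b = -1 ∧ f₁ c = -1 := by
    refine ⟨?_, ?_, ?_⟩ <;> simp [f₁, hab, hac, hbc, hba, hcb, hca]
  have hf₂ : f₂ a = 1 ∧ f₂ b = 1 ∧ f₂ c = -2 := by
    refine ⟨?_, ?_, ?_⟩ <;> simp [f₂, hab, hac, hbc, hba, hcb, hca]
  have hS₁ : ∀ g : M → ℝ, ∑ m, g m * f₁ m = 2 * g a - g b - g c := by
    intro g; rw [sum3, hf₁.1, hf₁.2.1, hf₁.2.2]; ring
  have hS₂ : ∀ g : M → ℝ, ∑ m, g m * f₂ m = g a + g b - 2 * g c := by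
    intro g; rw [sum3, hf₂.1, hf₂.2.1, hf₂.2.2]; ring
  have hS₃ : ∀ g : M → ℝ, ∑ m, g m * (f₁ + f₂) m = 3 * (g a - g c) := by
    intro g
    rw [sum3]
    simp only [Pi.add_apply, hf₁.1, hf₁.2.1, hf₁.2.2, hf₂.1, hf₂.2.1, hf₂.2.2]
    ring
  -- Part 1
  have p1 : nK {fun m => dist m b, fun m => dist m c} f₁ = 1 := by
    show sSup {r : ℝ | ∃ g ∈ ({fun m => dist m b, fun m => dist m c} : Set (M → ℝ)),
      r = |∑ m, g m * f₁ m|} = 1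
    have hset : {r : ℝ | ∃ g ∈ ({fun m => dist m b, fun m => dist m c} : Set (M → ℝ)),
        r = |∑ m, g m * f₁ m|} = {1} := by
      ext r
      simp only [Set.mem_setOf_eq, Set.mem_insert_iff, Set.mem_singleton_iff]
      constructor
      · rintro ⟨g, (rfl | rfl), rfl⟩ <;>
          · rw [hS₁]; norm_num [dab, dac, dcb, dbc, dist_self]
      · rintro rfl
        refine ⟨_, Or.inl rfl, ?_⟩
        rw [hS₁]; norm_num [dab, dcb, dist_self]
    rw [hset]
    exact csSup_singleton 1
  -- Part 2
  have p2 : nK {fun m => dist m a, fun m => dist m b} f₂ = 1 := by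
    show sSup {r : ℝ | ∃ g ∈ ({fun m => dist m a, fun m => dist m b} : Set (M → ℝ)),
      r = |∑ m, g m * f₂ m|} = 1
    have hset : {r : ℝ | ∃ g ∈ ({fun m => dist m a, fun m => dist m b} : Set (M → ℝ)),
        r = |∑ m, g m * f₂ m|} = {1} := by
      ext r
      simp only [Set.mem_setOf_eq, Set.mem_insert_iff, Set.mem_singleton_iff]
      constructor
      · rintro ⟨g, (rfl | rfl), rfl⟩ <;>
          · rw [hS₂]; norm_num [dba, dca, dab, dcb, dist_self]
      · rintro rfl
        refine ⟨_, Or.inl rfl, ?_⟩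
        rw [hS₂]; norm_num [dba, dca, dist_self]
    rw [hset]
    exact csSup_singleton 1
  -- Part 3
  have p3 : ∀ K, condA K → condB K → nK K (f₁ + f₂) = 3 := by
    intro K hA hB
    show sSup {r : ℝ | ∃ g ∈ K, r = |∑ m, g m * (f₁ + f₂) m|} = 3
    apply IsGreatest.csSup_eq
    constructor
    · obtain ⟨g, hg, hgv⟩ := hB a c
      rw [dac] at hgv
      exact ⟨g, hg, by rw [hS₃, abs_mul, hgv]; norm_num⟩
    · rintro r ⟨g, hg, rfl⟩
      have h := (hA g hg).dist_le_mul a c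
      rw [Real.dist_eq, dac] at h
      have h' : |g a - g c| ≤ 1 := by simpa using h
      rw [hS₃, abs_mul]
      have h3 : |(3 : ℝ)| = 3 := by norm_num
      rw [h3]
      linarith
  -- The two explicit sets satisfy conditions A and B
  have hA₂ : condA {fun m => dist m b, fun m => dist m c} := by
    rintro g (rfl | rfl)
    · exact LipschitzWith.dist_left b
    · exact LipschitzWith.dist_left c
  have hB₂ : condB {fun m => dist m b, fun m => dist m c} := by
    intro u v
    rcases hall u with rfl | rfl | rfl <;> rcases hall v with rfl | rfl | rfl
    · refine ⟨_, Or.inl rfl, ?_⟩; simp [dist_self]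
    · refine ⟨_, Or.inl rfl, ?_⟩; simp [dab, dist_self]
    · refine ⟨_, Or.inr rfl, ?_⟩; simp [dac, dist_self]
    · refine ⟨_, Or.inl rfl, ?_⟩; simp [dab, dba, dist_self]
    · refine ⟨_, Or.inl rfl, ?_⟩; simp [dist_self]
    · refine ⟨_, Or.inl rfl, ?_⟩; simp [dcb, dbc, dist_self]
    · refine ⟨_, Or.inr rfl, ?_⟩; simp [dac, dca, dist_self]
    · refine ⟨_, Or.inr rfl, ?_⟩; simp [dbc, dcb, dist_self]
    · refine ⟨_, Or.inr rfl, ?_⟩; simp [dist_self]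
  have hA₁ : condA {fun m => dist m a, fun m => dist m b} := by
    rintro g (rfl | rfl)
    · exact LipschitzWith.dist_left a
    · exact LipschitzWith.dist_left b
  have hB₁ : condB {fun m => dist m a, fun m => dist m b} := by
    intro u v
    rcases hall u with rfl | rfl | rfl <;> rcases hall v with rfl | rfl | rfl
    · refine ⟨_, Or.inl rfl, ?_⟩; simp [dist_self]
    · refine ⟨_, Or.inr rfl, ?_⟩; simp [dab, dist_self]
    · refine ⟨_, Or.inl rfl, ?_⟩; simp [dca, dac, dist_self]
    · refine ⟨_, Or.inl rfl, ?_⟩; simp [dba, dist_self]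
    · refine ⟨_, Or.inl rfl, ?_⟩; simp [dist_self]
    · refine ⟨_, Or.inr rfl, ?_⟩; simp [dcb, dbc, dist_self]
    · refine ⟨_, Or.inl rfl, ?_⟩; simp [dca, dist_self]
    · refine ⟨_, Or.inr rfl, ?_⟩; simp [dcb, dist_self]
    · refine ⟨_, Or.inl rfl, ?_⟩; simp [dist_self]
  -- nonnegativity of all nK values, giving lower bound 0 on the N-sets
  have hnn : ∀ f : M → ℝ, ∀ r ∈ {r : ℝ | ∃ K, condA K ∧ condB K ∧ r = nK K f}, (0 : ℝ) ≤ r := by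
    rintro f r ⟨K, _, _, rfl⟩
    apply Real.sSup_nonneg
    rintro x ⟨g, _, rfl⟩
    exact abs_nonneg _
  -- N (f₁ + f₂) = 3
  have hN3 : N (f₁ + f₂) = 3 := by
    show sInf {r : ℝ | ∃ K, condA K ∧ condB K ∧ r = nK K (f₁ + f₂)} = 3
    have hset : {r : ℝ | ∃ K, condA K ∧ condB K ∧ r = nK K (f₁ + f₂)} = {3} := by
      ext r
      simp only [Set.mem_setOf_eq, Set.mem_singleton_iff]
      constructor
      · rintro ⟨K, hA, hB, rfl⟩; exact p3 K hA hB
      · rintro rfl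
        exact ⟨_, hA₂, hB₂, (p3 _ hA₂ hB₂).symm⟩
    rw [hset]
    exact csInf_singleton 3
  have hN₁ : N f₁ ≤ 1 := by
    apply csInf_le ⟨0, hnn f₁⟩
    exact ⟨_, hA₂, hB₂, p1.symm⟩
  have hN₂ : N f₂ ≤ 1 := by
    apply csInf_le ⟨0, hnn f₂⟩
    exact ⟨_, hA₁, hB₁, p2.symm⟩
  refine ⟨p1, p2, p3, ?_⟩
  rw [hN3]
  intro h
  linarith
end

section
/- Let T be a finite weighted tree with edge weights d_e > 0, rooted at some vertex. For each edge e with endpoints w (closer to root) and z, set f_e = 1_w - 1_z ∈ TP(T). Then every f ∈ TP(T) has a unique representation f = ∑_{e∈E(T)} a_e f_e, and the double-point seminorm satisfies ‖f‖_DP = max over paths P in T (with vertex endpoints u,v, decomposed as ascending part P₁ toward the root followed by descending part P₂) of |∑_{e∈P₁} d_e a_e − ∑_{e∈P₂} d_e a_e|. -/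
open Classical

/-- The set of (indices of) edges on the path from `v` to the root `0` in the rooted tree
on `Fin (n+1)` given by the parent function `p`: each non-root vertex `z` indexes the edge
`{p z, z}`, and `z` is on the chain of `v` iff `z` is an ancestor of `v` (or `v` itself). -/
noncomputable def chainToRoot {n : ℕ} (p : Fin (n + 1) → Fin (n + 1))
    (v : Fin (n + 1)) : Finset (Fin (n + 1)) :=
  Finset.univ.filter fun z => z ≠ 0 ∧ ∃ k, p^[k] v = z

/-- The weighted tree (geodesic) distance: the weight of the symmetric difference of the
two root-chains, i.e. the sum of the weights of the edges on the unique path from `u`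
to `v`. -/
noncomputable def treeDist {n : ℕ} (p : Fin (n + 1) → Fin (n + 1))
    (wt : Fin (n + 1) → ℝ) (u v : Fin (n + 1)) : ℝ :=
  ∑ z ∈ (chainToRoot p u \ chainToRoot p v) ∪ (chainToRoot p v \ chainToRoot p u), wt z

/-!
Summing `f = ∑ a_z f_z` over the subtree below an edge `z` telescopes to `-a_z`, so the
coefficients are forced to be minus the subtree sums of `f`; conversely these coefficients
represent `f`, because a function whose subtree sums (and total sum) all vanish is zero by
downward induction on the vertices. For the seminorm, `d(v, x) - d(u, x)` is a signed sum of
edge weights over the root paths of `u` and `v`; pairing it with the zero-sum `f`, each edge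
`z` contributes its weight times the sum of `f` below `z`, i.e. `d_z a_z`.
-/

open Finset

theorem Finset.sum_sdiff_union_sdiff {ι M : Type*} [DecidableEq ι] [AddCommGroup M]
    (s t : Finset ι) (w : ι → M) :
    ∑ z ∈ (s \ t) ∪ (t \ s), w z = ∑ z ∈ s, w z + ∑ z ∈ t, w z - 2 • ∑ z ∈ s ∩ t, w z := by
  rw [sum_union disjoint_sdiff_sdiff, ← sum_inter_add_sum_sdiff s t w,
    ← sum_inter_add_sum_sdiff t s w, inter_comm t s]
  abel

theorem Finset.sum_sum_inter_mul {ι κ R : Type*} [Fintype ι] [DecidableEq κ]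
    [NonUnitalNonAssocSemiring R] (s : Finset κ) (C : ι → Finset κ) (w : κ → R) (f : ι → R) :
    ∑ m, (∑ z ∈ s ∩ C m, w z) * f m = ∑ z ∈ s, w z * ∑ m with z ∈ C m, f m := by
  simp_rw [← filter_mem_eq_inter, sum_filter, sum_mul, mul_sum]
  rw [sum_comm]
  refine sum_congr rfl fun z _ => sum_congr rfl fun m _ => ?_
  split_ifs <;> simp

theorem eq_zero_of_forall_exists_sum_eq_zero {α M : Type*} [PartialOrder α] [WellFoundedGT α]
    [DecidableEq α] [AddCommGroup M] (g : α → M)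
    (h : ∀ v, ∃ s : Finset α, v ∈ s ∧ (∀ m ∈ s, v ≤ m) ∧ ∑ m ∈ s, g m = 0) : g = 0 := by
  funext v
  induction v using WellFoundedGT.induction with
  | _ v ih =>
    obtain ⟨s, hvs, hle, hsum⟩ := h v
    have hrest : ∑ m ∈ s.erase v, g m = 0 := sum_eq_zero fun m hm =>
      ih m ((hle m (mem_of_mem_erase hm)).lt_of_ne' (ne_of_mem_erase hm))
    rwa [← add_sum_erase s g hvs, hrest, add_zero] at hsum

section EdgeVec

variable {α : Type*} [DecidableEq α]

def edgeVec (p : α → α) (z : α) : α → ℝ :=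
  (fun v => if v = p z then 1 else 0) - fun v => if v = z then 1 else 0

theorem sum_edgeVec (p : α → α) (s : Finset α) (z : α) :
    ∑ m ∈ s, edgeVec p z m = (if p z ∈ s then 1 else 0) - if z ∈ s then 1 else 0 := by
  simp [edgeVec, sum_sub_distrib]

theorem sum_sum_smul_edgeVec [Fintype α] (p : α → α) (s : Finset α) (a : α → ℝ) :
    ∑ m ∈ s, (∑ z, a z • edgeVec p z) m =
      ∑ z, a z * ((if p z ∈ s then 1 else 0) - if z ∈ s then 1 else 0) := by
  simp only [Finset.sum_apply, Pi.smul_apply, smul_eq_mul]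
  rw [sum_comm]
  simp only [← mul_sum, sum_edgeVec]

end EdgeVec

section ParentMap

variable {n : ℕ} {p : Fin (n + 1) → Fin (n + 1)}

/-- For `z ≠ 0` this is the subtree rooted at `z`; for the root it is empty. -/
noncomputable def belowEdge (p : Fin (n + 1) → Fin (n + 1)) (z : Fin (n + 1)) :
    Finset (Fin (n + 1)) :=
  univ.filter fun m => z ∈ chainToRoot p m

theorem mem_belowEdge {z m : Fin (n + 1)} :
    m ∈ belowEdge p z ↔ z ≠ 0 ∧ ∃ k, p^[k] m = z := by
  simp [belowEdge, chainToRoot]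

@[simp]
theorem belowEdge_zero : belowEdge p 0 = ∅ := by
  ext m
  simp [mem_belowEdge]

theorem mem_belowEdge_of_parent_mem {z m : Fin (n + 1)} (h : p m ∈ belowEdge p z) :
    m ∈ belowEdge p z := by
  obtain ⟨hz, k, hk⟩ := mem_belowEdge.1 h
  exact mem_belowEdge.2 ⟨hz, k + 1, hk⟩

theorem parent_mem_belowEdge {z m : Fin (n + 1)} (h : m ∈ belowEdge p z) (hmz : m ≠ z) :
    p m ∈ belowEdge p z := by
  obtain ⟨hz, _ | k, hk⟩ := mem_belowEdge.1 h
  · exact absurd hk hmz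
  · exact mem_belowEdge.2 ⟨hz, k, hk⟩

theorem sum_treeDist_sub_mul (wt : Fin (n + 1) → ℝ) {f : Fin (n + 1) → ℝ} (hf : ∑ v, f v = 0)
    (u v : Fin (n + 1)) :
    ∑ m, ((treeDist p wt v m - treeDist p wt u m) / 2) * f m =
      ∑ z ∈ chainToRoot p u, wt z * ∑ m ∈ belowEdge p z, f m -
        ∑ z ∈ chainToRoot p v, wt z * ∑ m ∈ belowEdge p z, f m := by
  have hsplit : ∀ m, (treeDist p wt v m - treeDist p wt u m) / 2 * f m =
      (∑ z ∈ chainToRoot p v, wt z - ∑ z ∈ chainToRoot p u, wt z) / 2 * f m -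
        (∑ z ∈ chainToRoot p v ∩ chainToRoot p m, wt z) * f m +
        (∑ z ∈ chainToRoot p u ∩ chainToRoot p m, wt z) * f m := by
    intro m
    simp only [treeDist, sum_sdiff_union_sdiff, nsmul_eq_mul]
    ring
  rw [sum_congr rfl fun m _ => hsplit m, sum_add_distrib, sum_sub_distrib, ← mul_sum, hf,
    sum_sum_inter_mul, sum_sum_inter_mul]
  simp only [belowEdge]
  ring

variable (hp0 : p 0 = 0) (hp : ∀ v, v ≠ 0 → p v < v)
include hp0 hp

theorem le_of_mem_belowEdge {z m : Fin (n + 1)} (h : m ∈ belowEdge p z) : z ≤ m := by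
  have hpid : p ≤ id := fun v => by
    rcases eq_or_ne v 0 with rfl | hv
    · exact hp0.le
    · exact (hp v hv).le
  obtain ⟨-, k, rfl⟩ := mem_belowEdge.1 h
  exact Function.iterate_le_id_of_le_id hpid k m

theorem parent_not_mem_belowEdge (z : Fin (n + 1)) : p z ∉ belowEdge p z := by
  intro h
  obtain ⟨hz, -⟩ := mem_belowEdge.1 h
  exact (hp z hz).not_ge (le_of_mem_belowEdge hp0 hp h)

theorem sum_belowEdge_sum_smul_edgeVec {w : Fin (n + 1)} (hw : w ≠ 0) (a : Fin (n + 1) → ℝ) :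
    ∑ m ∈ belowEdge p w, (∑ z, a z • edgeVec p z) m = -a w := by
  have hterm : ∀ z, (if p z ∈ belowEdge p w then (1 : ℝ) else 0) -
      (if z ∈ belowEdge p w then 1 else 0) = if z = w then -1 else 0 := by
    intro z
    rcases eq_or_ne z w with rfl | hzw
    · simp [parent_not_mem_belowEdge hp0 hp, mem_belowEdge.2 ⟨hw, 0, rfl⟩]
    · by_cases hz : z ∈ belowEdge p w
      · simp [hz, parent_mem_belowEdge hz hzw, hzw]
      · simp [hz, mt mem_belowEdge_of_parent_mem hz, hzw]
  rw [sum_sum_smul_edgeVec]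
  simp [hterm]

theorem eq_neg_sum_belowEdge_of_eq_sum_smul_edgeVec {f a : Fin (n + 1) → ℝ} (ha0 : a 0 = 0)
    (ha : f = ∑ z, a z • edgeVec p z) : a = fun z => -∑ m ∈ belowEdge p z, f m := by
  funext z
  rcases eq_or_ne z 0 with rfl | hz
  · simp [ha0]
  · rw [ha, sum_belowEdge_sum_smul_edgeVec hp0 hp hz, neg_neg]

theorem eq_sum_smul_edgeVec_neg_sum_belowEdge {f : Fin (n + 1) → ℝ} (hf : ∑ v, f v = 0) :
    f = ∑ z, (-∑ m ∈ belowEdge p z, f m) • edgeVec p z := by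
  refine sub_eq_zero.1 (eq_zero_of_forall_exists_sum_eq_zero _ fun v => ?_)
  rcases eq_or_ne v 0 with rfl | hv
  · refine ⟨univ, mem_univ 0, fun m _ => Fin.zero_le m, ?_⟩
    simp only [Pi.sub_apply, sum_sub_distrib, sum_sum_smul_edgeVec]
    simp [hf]
  · refine ⟨belowEdge p v, mem_belowEdge.2 ⟨hv, 0, rfl⟩, fun m => le_of_mem_belowEdge hp0 hp, ?_⟩
    simp only [Pi.sub_apply, sum_sub_distrib, sum_belowEdge_sum_smul_edgeVec hp0 hp hv]
    ring

end ParentMap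

theorem stmt13_general (n : ℕ) (p : Fin (n + 1) → Fin (n + 1)) (hp0 : p 0 = 0)
    (hp : ∀ v, v ≠ 0 → p v < v) (wt : Fin (n + 1) → ℝ)
    (f : Fin (n + 1) → ℝ) (hf : (∑ v, f v) = 0) :
    (∃! a : Fin (n + 1) → ℝ, a 0 = 0 ∧
      f = ∑ z, a z • ((fun v => if v = p z then (1 : ℝ) else 0) -
        fun v => if v = z then 1 else 0)) ∧
    (∀ a : Fin (n + 1) → ℝ, a 0 = 0 →
      f = ∑ z, a z • ((fun v => if v = p z then (1 : ℝ) else 0) -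
        fun v => if v = z then 1 else 0) →
      sSup {r : ℝ | ∃ u v : Fin (n + 1),
          r = |∑ m, ((treeDist p wt v m - treeDist p wt u m) / 2) * f m|} =
      sSup {r : ℝ | ∃ u v : Fin (n + 1),
          r = |∑ z ∈ chainToRoot p u \ chainToRoot p v, wt z * a z -
               ∑ z ∈ chainToRoot p v \ chainToRoot p u, wt z * a z|}) := by
  have hcoef : ∀ a : Fin (n + 1) → ℝ, a 0 = 0 → f = ∑ z, a z • edgeVec p z →
      a = fun z => -∑ m ∈ belowEdge p z, f m :=
    fun a ha0 ha => eq_neg_sum_belowEdge_of_eq_sum_smul_edgeVec hp0 hp ha0 ha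
  refine ⟨⟨_, ⟨by simp, eq_sum_smul_edgeVec_neg_sum_belowEdge hp0 hp hf⟩,
    fun a ⟨ha0, ha⟩ => hcoef a ha0 ha⟩, fun a ha0 ha => ?_⟩
  obtain rfl := hcoef a ha0 ha
  have hpath : ∀ u v : Fin (n + 1),
      |∑ m, ((treeDist p wt v m - treeDist p wt u m) / 2) * f m| =
        |∑ z ∈ chainToRoot p u \ chainToRoot p v, wt z * -∑ m ∈ belowEdge p z, f m -
          ∑ z ∈ chainToRoot p v \ chainToRoot p u, wt z * -∑ m ∈ belowEdge p z, f m| := by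
    intro u v
    rw [sum_treeDist_sub_mul wt hf, sum_sdiff_sub_sum_sdiff, ← abs_neg]
    simp only [mul_neg, sum_neg_distrib, neg_sub_neg, neg_sub]
  simp only [hpath]

/-- Let `T` be a finite weighted rooted tree (root `0`, parent map `p`,
positive edge weights `wt z` on edges `{p z, z}`, `z ≠ 0`), with geodesic metric
`treeDist`. Every zero-sum `f` has a unique representation `f = ∑_e a_e f_e` in the basis
`f_e = 𝟙_{p z} - 𝟙_z`, and the double-point seminorm of `f` equals the maximum over paths
`P` (from `u`, ascending along `P₁ = chain u \ chain v`, then descending along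
`P₂ = chain v \ chain u` to `v`) of `|∑_{e ∈ P₁} d_e a_e - ∑_{e ∈ P₂} d_e a_e|`. -/
theorem stmt13 (n : ℕ) (p : Fin (n + 1) → Fin (n + 1)) (hp0 : p 0 = 0)
    (hp : ∀ v, v ≠ 0 → p v < v) (wt : Fin (n + 1) → ℝ) (hwt : ∀ v, v ≠ 0 → 0 < wt v)
    (f : Fin (n + 1) → ℝ) (hf : (∑ v, f v) = 0) :
    (∃! a : Fin (n + 1) → ℝ, a 0 = 0 ∧
      f = ∑ z, a z • ((fun v => if v = p z then (1 : ℝ) else 0) -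
        fun v => if v = z then 1 else 0)) ∧
    (∀ a : Fin (n + 1) → ℝ, a 0 = 0 →
      f = ∑ z, a z • ((fun v => if v = p z then (1 : ℝ) else 0) -
        fun v => if v = z then 1 else 0) →
      sSup {r : ℝ | ∃ u v : Fin (n + 1),
          r = |∑ m, ((treeDist p wt v m - treeDist p wt u m) / 2) * f m|} =
      sSup {r : ℝ | ∃ u v : Fin (n + 1),
          r = |∑ z ∈ chainToRoot p u \ chainToRoot p v, wt z * a z -
               ∑ z ∈ chainToRoot p v \ chainToRoot p u, wt z * a z|}) :=
  stmt13_general n p hp0 hp wt f hf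
end

section
/- For every finite weighted tree T, the Banach–Mazur distance between the space TP(T) endowed with the double-point norm ‖·‖_DP (assuming it is a norm on TP(T)) and ℓ_∞^{|E(T)|} is at most 4; i.e., there is a linear bijection D: TP(T) → ℝ^{E(T)} with (1/4)‖f‖_DP ≤ ‖Df‖_∞ ≤ ‖f‖_DP. -/
/-!
For a zero-sum `f`, let `G v = ∑ d_e a_e` over the edges `e` between `v` and the root, with `a_e`
the mass of `f` below `e`. Writing `d(u, x) = h u + h x - 2 ⟨u, x⟩`, where `h` is the depth and
`⟨u, x⟩` the weight of the common part of the root paths, the double-point pairing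
`∑_x (d(v,x) - d(u,x))/2 · f x` collapses to `G u - G v`, the depth terms dying against `∑ f = 0`.
As `G root = 0`, this gives `sup |G| ≤ ‖f‖_DP ≤ 2 sup |G|`. The map `f ↦ G` is injective since
`G z - G (p z) = d_z a_z` recovers every subtree mass, and subtree masses determine `f` by
downward induction on the vertices (a descendant has a larger label than its ancestors).
-/

open Classical

/-- The double-point seminorm of `f ∈ TP(T)` for the tree metric. -/
noncomputable def dpNorm {n : ℕ} (p : Fin (n + 1) → Fin (n + 1))
    (wt : Fin (n + 1) → ℝ) (f : Fin (n + 1) → ℝ) : ℝ :=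
  sSup {r : ℝ | ∃ u v : Fin (n + 1),
    r = |∑ m, ((treeDist p wt v m - treeDist p wt u m) / 2) * f m|}

/-- The subspace `TP(T)` of zero-sum functions on the vertices. -/
noncomputable def TPtree (n : ℕ) : Submodule ℝ (Fin (n + 1) → ℝ) :=
  LinearMap.ker (∑ i, (LinearMap.proj i : (Fin (n + 1) → ℝ) →ₗ[ℝ] ℝ))

section SupremumOfDifferences

variable {α : Type*} [Finite α]

lemma bddAbove_setOf_exists_eq (h : α → ℝ) : BddAbove {r | ∃ a, r = h a} :=
  (Set.finite_range h).bddAbove.mono <| by rintro _ ⟨a, rfl⟩; exact ⟨a, rfl⟩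

lemma bddAbove_setOf_exists₂_eq (h : α → α → ℝ) : BddAbove {r | ∃ a b, r = h a b} :=
  (Set.finite_range fun ab : α × α => h ab.1 ab.2).bddAbove.mono <| by
    rintro _ ⟨a, b, rfl⟩; exact ⟨(a, b), rfl⟩

variable {G : α → ℝ} {a : α}

lemma abs_le_sSup_abs_of_eq_zero (ha : G a = 0) (w : α) :
    |G w| ≤ sSup {r | ∃ z : {z // z ≠ a}, r = |G z|} := by
  by_cases hw : w = a
  · rw [hw, ha, abs_zero]
    exact Real.sSup_nonneg fun _ ⟨_, hr⟩ => hr ▸ abs_nonneg _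
  · exact le_csSup (bddAbove_setOf_exists_eq _) ⟨⟨w, hw⟩, rfl⟩

lemma sSup_abs_sub_le_two_mul (ha : G a = 0) :
    sSup {r | ∃ u v, r = |G u - G v|} ≤ 2 * sSup {r | ∃ z : {z // z ≠ a}, r = |G z|} := by
  refine csSup_le ⟨_, a, a, rfl⟩ ?_
  rintro _ ⟨u, v, rfl⟩
  linarith [abs_sub (G u) (G v), abs_le_sSup_abs_of_eq_zero ha u,
    abs_le_sSup_abs_of_eq_zero ha v]

lemma sSup_abs_le_sSup_abs_sub (ha : G a = 0) :
    sSup {r | ∃ z : {z // z ≠ a}, r = |G z|} ≤ sSup {r | ∃ u v, r = |G u - G v|} := by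
  have hbdd := bddAbove_setOf_exists₂_eq fun u v => |G u - G v|
  refine Real.sSup_le ?_ (le_csSup_of_le hbdd ⟨a, a, rfl⟩ (by simp))
  rintro _ ⟨z, rfl⟩
  exact le_csSup hbdd ⟨z, a, by rw [ha, sub_zero]⟩

end SupremumOfDifferences

section RootedTree

open Finset

variable {n : ℕ} {p : Fin (n + 1) → Fin (n + 1)}

noncomputable def subtree (p : Fin (n + 1) → Fin (n + 1)) (v : Fin (n + 1)) :
    Finset (Fin (n + 1)) :=
  univ.filter fun m => ∃ k, p^[k] m = v

noncomputable def subtreeSum (p : Fin (n + 1) → Fin (n + 1)) (f : Fin (n + 1) → ℝ)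
    (v : Fin (n + 1)) : ℝ :=
  ∑ m ∈ subtree p v, f m

/-- The paper's `D f` at `v`: `∑_{e ∈ [v, root]} d_e a_e`, where `a_e` is the mass of `f` below the
edge `e` (the coordinates of `f` in the edge-difference basis). -/
noncomputable def rootPotential (p : Fin (n + 1) → Fin (n + 1)) (wt f : Fin (n + 1) → ℝ)
    (v : Fin (n + 1)) : ℝ :=
  ∑ z ∈ chainToRoot p v, wt z * subtreeSum p f z

lemma mem_subtree_self (v : Fin (n + 1)) : v ∈ subtree p v := by
  simp only [subtree, mem_filter, mem_univ, true_and]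
  exact ⟨0, rfl⟩

lemma mem_chainToRoot_iff {z m : Fin (n + 1)} :
    z ∈ chainToRoot p m ↔ z ≠ 0 ∧ m ∈ subtree p z := by
  simp [chainToRoot, subtree]

lemma parent_le_id (hp0 : p 0 = 0) (hp : ∀ v, v ≠ 0 → p v < v) : p ≤ id := fun v => by
  rcases eq_or_ne v 0 with rfl | hv
  · exact hp0.le
  · exact (hp v hv).le

lemma iterate_parent_lt (hp0 : p 0 = 0) (hp : ∀ v, v ≠ 0 → p v < v) {v : Fin (n + 1)}
    (hv : v ≠ 0) (k : ℕ) : p^[k] (p v) < v :=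
  (Function.iterate_le_id_of_le_id (parent_le_id hp0 hp) k (p v)).trans_lt (hp v hv)

lemma lt_of_mem_subtree (hp0 : p 0 = 0) (hp : ∀ v, v ≠ 0 → p v < v) {v m : Fin (n + 1)}
    (hm : m ∈ subtree p v) (hmv : m ≠ v) : v < m := by
  obtain ⟨k, rfl⟩ := (mem_filter.mp hm).2
  cases k with
  | zero => exact absurd rfl hmv
  | succ k =>
    have hm0 : m ≠ 0 := by
      rintro rfl
      exact hmv (Function.iterate_fixed hp0 _).symm
    simpa only [Function.iterate_succ_apply] using iterate_parent_lt hp0 hp hm0 k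

lemma chainToRoot_zero (hp0 : p 0 = 0) : chainToRoot p 0 = ∅ := by
  ext z
  simp [chainToRoot, Function.iterate_fixed hp0, eq_comm]

lemma chainToRoot_of_ne_zero {z : Fin (n + 1)} (hz : z ≠ 0) :
    chainToRoot p z = insert z (chainToRoot p (p z)) := by
  ext y
  simp only [chainToRoot, mem_filter, mem_univ, true_and, mem_insert]
  constructor
  · rintro ⟨hy, _ | k, hk⟩
    · exact Or.inl hk.symm
    · exact Or.inr ⟨hy, k, by rwa [Function.iterate_succ_apply] at hk⟩
  · rintro (rfl | ⟨hy, k, hk⟩)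
    · exact ⟨hz, 0, rfl⟩
    · exact ⟨hy, k + 1, by rwa [Function.iterate_succ_apply]⟩

lemma notMem_chainToRoot_parent (hp0 : p 0 = 0) (hp : ∀ v, v ≠ 0 → p v < v)
    {z : Fin (n + 1)} (hz : z ≠ 0) : z ∉ chainToRoot p (p z) := by
  simp only [chainToRoot, mem_filter, mem_univ, true_and, not_and, not_exists]
  exact fun _ k hk => (iterate_parent_lt hp0 hp hz k).ne hk

lemma rootPotential_zero (hp0 : p 0 = 0) (wt f : Fin (n + 1) → ℝ) :
    rootPotential p wt f 0 = 0 := by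
  rw [rootPotential, chainToRoot_zero hp0, sum_empty]

lemma rootPotential_of_ne_zero (hp0 : p 0 = 0) (hp : ∀ v, v ≠ 0 → p v < v)
    (wt f : Fin (n + 1) → ℝ) {z : Fin (n + 1)} (hz : z ≠ 0) :
    rootPotential p wt f z = wt z * subtreeSum p f z + rootPotential p wt f (p z) := by
  rw [rootPotential, chainToRoot_of_ne_zero hz, sum_insert (notMem_chainToRoot_parent hp0 hp hz)]
  rfl

lemma treeDist_eq (wt : Fin (n + 1) → ℝ) (u v : Fin (n + 1)) :
    treeDist p wt u v = ∑ z ∈ chainToRoot p u, wt z + ∑ z ∈ chainToRoot p v, wt z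
      - 2 * ∑ z ∈ chainToRoot p u ∩ chainToRoot p v, wt z := by
  have hsdiff : ∀ s t : Finset (Fin (n + 1)),
      ∑ z ∈ s \ t, wt z = ∑ z ∈ s, wt z - ∑ z ∈ s ∩ t, wt z := fun s t => by
    rw [← sdiff_inter_self_left, sum_sdiff_eq_sub inter_subset_left]
  rw [treeDist, sum_union disjoint_sdiff_sdiff, hsdiff, hsdiff, inter_comm (chainToRoot p v)]
  ring

lemma sum_sum_inter_chainToRoot_mul (wt f : Fin (n + 1) → ℝ) (v : Fin (n + 1)) :
    ∑ m, (∑ z ∈ chainToRoot p v ∩ chainToRoot p m, wt z) * f m = rootPotential p wt f v := by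
  calc ∑ m, (∑ z ∈ chainToRoot p v ∩ chainToRoot p m, wt z) * f m
      = ∑ m, ∑ z ∈ chainToRoot p v, if m ∈ subtree p z then wt z * f m else 0 := by
        refine sum_congr rfl fun m _ => ?_
        rw [sum_mul, ← filter_mem_eq_inter, sum_filter]
        refine sum_congr rfl fun z hz => ?_
        simp [mem_chainToRoot_iff, (mem_chainToRoot_iff.mp hz).1]
    _ = rootPotential p wt f v := by
        rw [sum_comm]
        simp only [← sum_filter, ← mul_sum, filter_univ_mem]
        rfl

lemma sum_treeDist_sub_mul_eq (wt f : Fin (n + 1) → ℝ) (hf : ∑ m, f m = 0) (u v : Fin (n + 1)) :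
    ∑ m, ((treeDist p wt v m - treeDist p wt u m) / 2) * f m
      = rootPotential p wt f u - rootPotential p wt f v := by
  calc ∑ m, ((treeDist p wt v m - treeDist p wt u m) / 2) * f m
      = ∑ m, ((∑ z ∈ chainToRoot p v, wt z - ∑ z ∈ chainToRoot p u, wt z) / 2 * f m
          + ((∑ z ∈ chainToRoot p u ∩ chainToRoot p m, wt z) * f m
            - (∑ z ∈ chainToRoot p v ∩ chainToRoot p m, wt z) * f m)) :=
        sum_congr rfl fun m _ => by rw [treeDist_eq, treeDist_eq]; ring
    _ = rootPotential p wt f u - rootPotential p wt f v := by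
        rw [sum_add_distrib, ← mul_sum, hf, mul_zero, zero_add, sum_sub_distrib,
          sum_sum_inter_chainToRoot_mul, sum_sum_inter_chainToRoot_mul]

lemma dpNorm_eq_sSup (wt f : Fin (n + 1) → ℝ) (hf : ∑ m, f m = 0) :
    dpNorm p wt f = sSup {r | ∃ u v, r = |rootPotential p wt f u - rootPotential p wt f v|} := by
  simp only [dpNorm, sum_treeDist_sub_mul_eq wt f hf]

lemma eq_zero_of_subtreeSum_eq_zero (hp0 : p 0 = 0) (hp : ∀ v, v ≠ 0 → p v < v)
    {f : Fin (n + 1) → ℝ} (hf : ∑ m, f m = 0) (hS : ∀ v, v ≠ 0 → subtreeSum p f v = 0) :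
    f = 0 := by
  have hpos : ∀ v, v ≠ 0 → f v = 0 := by
    intro v
    induction v using WellFoundedGT.induction with
    | _ v ih =>
      intro hv
      have hbelow : ∑ m ∈ (subtree p v).erase v, f m = 0 :=
        sum_eq_zero fun m hm => by
          have hvm := lt_of_mem_subtree hp0 hp (mem_of_mem_erase hm) (ne_of_mem_erase hm)
          exact ih m hvm (ne_bot_of_gt hvm)
      have hsplit := add_sum_erase _ f (mem_subtree_self (p := p) v)
      rw [hbelow, add_zero] at hsplit
      rw [hsplit]
      exact hS v hv
  have hroot := add_sum_erase univ f (mem_univ 0)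
  rw [sum_eq_zero fun m hm => hpos m (ne_of_mem_erase hm), add_zero, hf] at hroot
  funext v
  rcases eq_or_ne v 0 with rfl | hv
  · rw [Pi.zero_apply, ← hroot]
  · exact hpos v hv

lemma eq_zero_of_rootPotential_eq_zero (hp0 : p 0 = 0) (hp : ∀ v, v ≠ 0 → p v < v)
    {wt : Fin (n + 1) → ℝ} (hwt : ∀ v, v ≠ 0 → 0 < wt v)
    {f : Fin (n + 1) → ℝ} (hf : ∑ m, f m = 0) (hG : ∀ z, z ≠ 0 → rootPotential p wt f z = 0) :
    f = 0 := by
  have hG' : ∀ z, rootPotential p wt f z = 0 := fun z => by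
    rcases eq_or_ne z 0 with rfl | hz
    · exact rootPotential_zero hp0 wt f
    · exact hG z hz
  refine eq_zero_of_subtreeSum_eq_zero hp0 hp hf fun z hz => ?_
  have hrec := rootPotential_of_ne_zero hp0 hp wt f hz
  rw [hG', hG', add_zero, eq_comm, mul_eq_zero] at hrec
  exact hrec.resolve_left (hwt z hz).ne'

end RootedTree

section PotentialMap

variable {n : ℕ}

lemma mem_TPtree {f : Fin (n + 1) → ℝ} : f ∈ TPtree n ↔ ∑ m, f m = 0 := by
  simp [TPtree, LinearMap.sum_apply]

lemma finrank_TPtree : Module.finrank ℝ (TPtree n) = n := by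
  have hne : (∑ i, LinearMap.proj i : Module.Dual ℝ (Fin (n + 1) → ℝ)) ≠ 0 := fun h => by
    simpa [LinearMap.sum_apply] using LinearMap.congr_fun h (Pi.single 0 1)
  have := Module.Dual.finrank_ker_add_one_of_ne_zero hne
  simp only [Module.finrank_fin_fun] at this
  exact Nat.add_right_cancel this

noncomputable def potentialMap (p : Fin (n + 1) → Fin (n + 1)) (wt : Fin (n + 1) → ℝ) :
    TPtree n →ₗ[ℝ] ({z : Fin (n + 1) // z ≠ 0} → ℝ) where
  toFun f z := rootPotential p wt f z
  map_add' f g := by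
    funext z
    simp only [rootPotential, subtreeSum, Submodule.coe_add, Pi.add_apply, Finset.sum_add_distrib,
      mul_add]
  map_smul' c f := by
    funext z
    simp only [rootPotential, subtreeSum, SetLike.val_smul, Pi.smul_apply, smul_eq_mul,
      RingHom.id_apply, Finset.mul_sum, mul_left_comm c]

lemma potentialMap_injective {p : Fin (n + 1) → Fin (n + 1)} (hp0 : p 0 = 0)
    (hp : ∀ v, v ≠ 0 → p v < v) {wt : Fin (n + 1) → ℝ} (hwt : ∀ v, v ≠ 0 → 0 < wt v) :
    Function.Injective (potentialMap p wt) := by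
  rw [← LinearMap.ker_eq_bot, LinearMap.ker_eq_bot']
  intro f hf
  exact Subtype.ext <| eq_zero_of_rootPotential_eq_zero hp0 hp hwt (mem_TPtree.mp f.2)
    fun z hz => congrFun hf ⟨z, hz⟩

noncomputable def potentialEquiv {p : Fin (n + 1) → Fin (n + 1)} (hp0 : p 0 = 0)
    (hp : ∀ v, v ≠ 0 → p v < v) {wt : Fin (n + 1) → ℝ} (hwt : ∀ v, v ≠ 0 → 0 < wt v) :
    TPtree n ≃ₗ[ℝ] ({z : Fin (n + 1) // z ≠ 0} → ℝ) :=
  LinearMap.linearEquivOfInjective (potentialMap p wt) (potentialMap_injective hp0 hp hwt)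
    (by simp [finrank_TPtree])

end PotentialMap

/-- For every finite weighted tree `T` (rooted tree on `Fin (n+1)` with
parent map `p` and positive edge weights), the Banach–Mazur distance between
`(TP(T), ‖·‖_DP)` and `ℓ_∞^{|E(T)|}` is at most `4`: there is a linear bijection
`D : TP(T) → ℝ^{E(T)}` with `(1/4)‖f‖_DP ≤ ‖D f‖_∞ ≤ ‖f‖_DP` for all `f`. -/
theorem stmt14 (n : ℕ) (p : Fin (n + 1) → Fin (n + 1)) (hp0 : p 0 = 0)
    (hp : ∀ v, v ≠ 0 → p v < v) (wt : Fin (n + 1) → ℝ)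
    (hwt : ∀ v, v ≠ 0 → 0 < wt v) :
    ∃ D : TPtree n ≃ₗ[ℝ] ({z : Fin (n + 1) // z ≠ 0} → ℝ),
      ∀ f : TPtree n,
        (1 / 4) * dpNorm p wt (f : Fin (n + 1) → ℝ) ≤
          sSup {r : ℝ | ∃ z, r = |D f z|} ∧
        sSup {r : ℝ | ∃ z, r = |D f z|} ≤ dpNorm p wt (f : Fin (n + 1) → ℝ) := by
  refine ⟨potentialEquiv hp0 hp hwt, fun f => ?_⟩
  have hG0 := rootPotential_zero hp0 wt f
  have hD : ∀ z, potentialEquiv hp0 hp hwt f z = rootPotential p wt f z := fun _ => rfl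
  simp only [hD, dpNorm_eq_sSup wt f (mem_TPtree.mp f.2)]
  have hM := (abs_nonneg _).trans (abs_le_sSup_abs_of_eq_zero hG0 0)
  have hdp := sSup_abs_sub_le_two_mul hG0
  exact ⟨by linarith, sSup_abs_le_sSup_abs_sub hG0⟩
end

section
/- Let M ⊂ ℓ₁ consist of all vectors ∑_{i∈A} 2^i e_i, A ⊂ ℕ finite, with the ℓ₁-metric. If T: M → X is an isometric embedding into a Banach space X with T(0) = 0, then the vectors f_i = 2^{-i} T(2^i e_i) ∈ X are isometrically equivalent to the unit vector basis of ℓ₁: for all n and all scalars c₁,...,c_n, ‖∑_{i=1}^n c_i f_i‖_X = ∑_{i=1}^n |c_i|. In particular, X contains an isometric copy of ℓ₁ whenever it contains an isometric copy of M. -/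
/-!
Let `A`, `B` be the sets of indices with nonnegative, resp. negative, coefficient, write
`x_S = ∑_{i ∈ S} 2^i e_i`, and let `g` be a norming functional of `T x_A - T x_B`. Then `φ = g ∘ T`
is `1`-Lipschitz on `M`, vanishes at `0`, and `φ x_A - φ x_B = d(x_A, x_B) = d(x_A, 0) + d(0, x_B)`,
so `φ x_A = ‖x_A‖` and `φ x_B = -‖x_B‖`. Comparing with the paths `x_A → 2^i e_i → 0` (for `i ∈ A`)
and `0 → 2^i e_i → x_B` (for `i ∈ B`) forces `φ (2^i e_i) = ± 2^i` with the sign of `cᵢ`. Hence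
`g (∑ cᵢ fᵢ) = ∑ |cᵢ|`, and the triangle inequality gives the reverse bound.
-/

open Finset

section Dual

variable {X : Type*} [SeminormedAddCommGroup X] [NormedSpace ℝ X]

theorem apply_sub_le_dist {g : StrongDual ℝ X} (hg : ‖g‖ ≤ 1) (u v : X) :
    g (u - v) ≤ dist u v := by
  rw [dist_eq_norm]
  exact (le_abs_self _).trans ((g.le_opNorm _).trans (mul_le_of_le_one_left (norm_nonneg _) hg))

theorem norm_sum_smul_eq_sum_abs {ι : Type*} (s : Finset ι) (c : ι → ℝ) (f : ι → X)
    (hf : ∀ i ∈ s, ‖f i‖ ≤ 1) {g : StrongDual ℝ X} (hg : ‖g‖ ≤ 1)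
    (hgf : ∀ i ∈ s, c i * g (f i) = |c i|) :
    ‖∑ i ∈ s, c i • f i‖ = ∑ i ∈ s, |c i| := by
  refine le_antisymm ?_ ?_
  · calc ‖∑ i ∈ s, c i • f i‖ ≤ ∑ i ∈ s, ‖c i • f i‖ := norm_sum_le _ _
      _ ≤ ∑ i ∈ s, |c i| := sum_le_sum fun i hi => by
          rw [norm_smul, Real.norm_eq_abs]
          exact mul_le_of_le_one_right (abs_nonneg _) (hf i hi)
  · calc ∑ i ∈ s, |c i| = g (∑ i ∈ s, c i • f i) := by
          simp only [map_sum, map_smul, smul_eq_mul]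
          exact (sum_congr rfl hgf).symm
      _ ≤ ‖g‖ * ‖∑ i ∈ s, c i • f i‖ := (le_abs_self _).trans (g.le_opNorm _)
      _ ≤ ‖∑ i ∈ s, c i • f i‖ := mul_le_of_le_one_left (norm_nonneg _) hg

end Dual

section BoxVertex

variable {ι : Type*} [DecidableEq ι] (w : ι → ℝ)

/-- For `w i = 2 ^ i` these are the points of `M`. -/
noncomputable def boxVertex (S : Finset ι) : lp (fun _ : ι => ℝ) 1 :=
  ∑ i ∈ S, w i • lp.single 1 i (1 : ℝ)

@[simp]
theorem boxVertex_empty : boxVertex w ∅ = 0 := sum_empty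

@[simp]
theorem boxVertex_singleton (i : ι) : boxVertex w {i} = w i • lp.single 1 i (1 : ℝ) :=
  sum_singleton _ _

theorem norm_sum_lpSingle_eq_sum_abs (S : Finset ι) (a : ι → ℝ) :
    ‖∑ i ∈ S, lp.single 1 i (a i)‖ = ∑ i ∈ S, |a i| := by
  simpa [Real.rpow_one] using lp.norm_sum_single (p := 1) (E := fun _ : ι => ℝ) (by simp) a S

variable {w}

theorem dist_boxVertex_of_disjoint (hw : ∀ i, 0 ≤ w i) {S R : Finset ι} (h : Disjoint S R) :
    dist (boxVertex w S) (boxVertex w R) = ∑ i ∈ S, w i + ∑ i ∈ R, w i := by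
  let a : ι → ℝ := fun i => if i ∈ S then w i else -w i
  have hdiff : boxVertex w S - boxVertex w R = ∑ i ∈ S ∪ R, lp.single 1 i (a i) := by
    rw [sum_union h, boxVertex, boxVertex, sub_eq_add_neg, ← sum_neg_distrib]
    congr 1
    · exact sum_congr rfl fun i hi => by simp [a, hi, ← lp.single_smul]
    · exact sum_congr rfl fun i hi => by
        simp [a, disjoint_right.mp h hi, ← lp.single_smul, ← lp.single_neg]
  rw [dist_eq_norm, hdiff, norm_sum_lpSingle_eq_sum_abs, sum_union h]
  congr 1
  · exact sum_congr rfl fun i hi => by simp [a, hi, abs_of_nonneg (hw i)]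
  · exact sum_congr rfl fun i hi => by simp [a, disjoint_right.mp h hi, abs_of_nonneg (hw i)]

theorem dist_boxVertex_of_subset (hw : ∀ i, 0 ≤ w i) {S R : Finset ι} (h : R ⊆ S) :
    dist (boxVertex w S) (boxVertex w R) = ∑ i ∈ S, w i - ∑ i ∈ R, w i := by
  have hdiff : boxVertex w S - boxVertex w R = boxVertex w (S \ R) - boxVertex w ∅ := by
    rw [boxVertex_empty, sub_zero, boxVertex, boxVertex, boxVertex, sum_sdiff_eq_sub h]
  rw [dist_eq_norm, hdiff, ← dist_eq_norm, dist_boxVertex_of_disjoint hw (disjoint_empty_right _),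
    sum_empty, add_zero, sum_sdiff_eq_sub h]

end BoxVertex

section Isometry

variable {ι : Type*} [DecidableEq ι] {w : ι → ℝ} {X : Type*} [SeminormedAddCommGroup X]
  [NormedSpace ℝ X] {T : lp (fun _ : ι => ℝ) 1 → X}

theorem norm_inv_smul_apply_single (hw : ∀ i, 0 < w i)
    (hT : ∀ S R, dist (T (boxVertex w S)) (T (boxVertex w R)) = dist (boxVertex w S) (boxVertex w R))
    (hT0 : T 0 = 0) (i : ι) : ‖(w i)⁻¹ • T (w i • lp.single 1 i (1 : ℝ))‖ = 1 := by
  have h := hT {i} ∅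
  rw [dist_boxVertex_of_disjoint (fun j => (hw j).le) (disjoint_empty_right _), boxVertex_empty,
    hT0, dist_zero_right, boxVertex_singleton, sum_singleton, sum_empty, add_zero] at h
  rw [norm_smul, h, norm_inv, Real.norm_of_nonneg (hw i).le, inv_mul_cancel₀ (hw i).ne']

theorem exists_dual_apply_single_eq (hw : ∀ i, 0 < w i)
    (hT : ∀ S R, dist (T (boxVertex w S)) (T (boxVertex w R)) = dist (boxVertex w S) (boxVertex w R))
    (hT0 : T 0 = 0) {A B : Finset ι} (hAB : Disjoint A B) :
    ∃ g : StrongDual ℝ X, ‖g‖ ≤ 1 ∧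
      (∀ i ∈ A, g ((w i)⁻¹ • T (w i • lp.single 1 i (1 : ℝ))) = 1) ∧
      ∀ i ∈ B, g ((w i)⁻¹ • T (w i • lp.single 1 i (1 : ℝ))) = -1 := by
  have hw' : ∀ i, 0 ≤ w i := fun i => (hw i).le
  obtain ⟨g, hg, hgAB⟩ : ∃ g : StrongDual ℝ X, ‖g‖ ≤ 1 ∧
      g (T (boxVertex w A) - T (boxVertex w B)) = ‖T (boxVertex w A) - T (boxVertex w B)‖ :=
    exists_dual_vector'' ℝ _
  set φ : Finset ι → ℝ := fun S => g (T (boxVertex w S)) with hφ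
  have hlip : ∀ S R, φ S - φ R ≤ dist (boxVertex w S) (boxVertex w R) := fun S R => by
    rw [← hT, hφ, ← map_sub]
    exact apply_sub_le_dist hg _ _
  have hφ0 : φ ∅ = 0 := by simp [hφ, hT0]
  have hφAB : φ A - φ B = ∑ i ∈ A, w i + ∑ i ∈ B, w i := by
    rw [hφ, ← map_sub, hgAB, ← dist_eq_norm, hT, dist_boxVertex_of_disjoint hw' hAB]
  have hA := hlip A ∅
  have hB := hlip ∅ B
  rw [dist_boxVertex_of_disjoint hw' (disjoint_empty_right _)] at hA
  rw [dist_boxVertex_of_disjoint hw' (disjoint_empty_left _)] at hB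
  have hφi : ∀ i, g ((w i)⁻¹ • T (w i • lp.single 1 i (1 : ℝ))) = (w i)⁻¹ * φ {i} := fun i => by
    simp only [hφ, map_smul, smul_eq_mul, boxVertex_singleton]
  refine ⟨g, hg, fun i hi => ?_, fun i hi => ?_⟩
  · have hAi := hlip A {i}
    rw [dist_boxVertex_of_subset hw' (singleton_subset_iff.mpr hi), sum_singleton] at hAi
    have hi0 := hlip {i} ∅
    rw [dist_boxVertex_of_disjoint hw' (disjoint_empty_right _), sum_singleton] at hi0
    simp only [sum_empty, add_zero] at hA hB hi0
    rw [hφi, show φ {i} = w i by linarith, inv_mul_cancel₀ (hw i).ne']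
  · have hiB := hlip {i} B
    rw [dist_comm, dist_boxVertex_of_subset hw' (singleton_subset_iff.mpr hi), sum_singleton] at hiB
    have h0i := hlip ∅ {i}
    rw [dist_boxVertex_of_disjoint hw' (disjoint_empty_left _), sum_singleton] at h0i
    simp only [sum_empty, zero_add] at hA hB h0i
    rw [hφi, show φ {i} = -w i by linarith, mul_neg, inv_mul_cancel₀ (hw i).ne']

end Isometry

theorem stmt16_general {X : Type*} [NormedAddCommGroup X] [NormedSpace ℝ X]
    (T : lp (fun _ : ℕ => ℝ) 1 → X)
    (hT : ∀ x y : lp (fun _ : ℕ => ℝ) 1,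
      (∃ A : Finset ℕ, x = ∑ i ∈ A, (2 : ℝ) ^ i • lp.single 1 i (1 : ℝ)) →
      (∃ A : Finset ℕ, y = ∑ i ∈ A, (2 : ℝ) ^ i • lp.single 1 i (1 : ℝ)) →
      dist (T x) (T y) = dist x y)
    (hT0 : T 0 = 0) :
    ∀ (n : ℕ) (c : Fin n → ℝ),
      ‖∑ i : Fin n, c i •
          (((2 : ℝ) ^ (i : ℕ))⁻¹ • T ((2 : ℝ) ^ (i : ℕ) • lp.single 1 (i : ℕ) (1 : ℝ)))‖ =
        ∑ i : Fin n, |c i| := by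
  intro n c
  have hw : ∀ i : ℕ, 0 < (2 : ℝ) ^ i := fun i => by positivity
  have hTM : ∀ S R, dist (T (boxVertex (fun i => (2 : ℝ) ^ i) S))
      (T (boxVertex (fun i => (2 : ℝ) ^ i) R)) =
      dist (boxVertex (fun i => (2 : ℝ) ^ i) S) (boxVertex (fun i => (2 : ℝ) ^ i) R) :=
    fun S R => hT _ _ ⟨S, rfl⟩ ⟨R, rfl⟩
  obtain ⟨g, hg, hgP, hgN⟩ := exists_dual_apply_single_eq hw hTM hT0
    ((disjoint_map Fin.valEmbedding).mpr (disjoint_filter_filter_not univ univ (0 ≤ c ·)))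
  refine norm_sum_smul_eq_sum_abs _ c _ (fun i _ => (norm_inv_smul_apply_single hw hTM hT0 i).le)
    hg fun i _ => ?_
  by_cases hc : 0 ≤ c i
  · have h := hgP i (mem_map_of_mem _ (mem_filter.mpr ⟨mem_univ _, hc⟩))
    rw [h, mul_one, abs_of_nonneg hc]
  · have h := hgN i (mem_map_of_mem _ (mem_filter.mpr ⟨mem_univ _, hc⟩))
    rw [h, mul_neg_one, abs_of_neg (not_le.mp hc)]

/-- Let `M ⊂ ℓ₁` consist of all `∑_{i ∈ A} 2^i e_i`, `A ⊂ ℕ` finite. If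
`T` maps `M` isometrically into a Banach space `X` with `T 0 = 0`, then the vectors
`f_i = 2^{-i} T(2^i e_i)` are isometrically equivalent to the unit vector basis of `ℓ₁`:
`‖∑ᵢ cᵢ fᵢ‖ = ∑ᵢ |cᵢ|` for all finite scalar collections. In particular `X` contains an
isometric copy of `ℓ₁`. -/
theorem stmt16 {X : Type*} [NormedAddCommGroup X] [NormedSpace ℝ X] [CompleteSpace X]
    (T : lp (fun _ : ℕ => ℝ) 1 → X)
    (hT : ∀ x y : lp (fun _ : ℕ => ℝ) 1,
      (∃ A : Finset ℕ, x = ∑ i ∈ A, (2 : ℝ) ^ i • lp.single 1 i (1 : ℝ)) →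
      (∃ A : Finset ℕ, y = ∑ i ∈ A, (2 : ℝ) ^ i • lp.single 1 i (1 : ℝ)) →
      dist (T x) (T y) = dist x y)
    (hT0 : T 0 = 0) :
    ∀ (n : ℕ) (c : Fin n → ℝ),
      ‖∑ i : Fin n, c i •
          (((2 : ℝ) ^ (i : ℕ))⁻¹ • T ((2 : ℝ) ^ (i : ℕ) • lp.single 1 (i : ℕ) (1 : ℝ)))‖ =
        ∑ i : Fin n, |c i| :=
  stmt16_general T hT hT0
end

section
/- Let X be a Banach space and T: M → X an isometric embedding with T(0)=0, where M ⊂ ℓ₁ as above. For each finite sign pattern θ₁,...,θ_n ∈ {−1,+1}, set A₊ = {i ≤ n : θ_i = 1}, A₋ = {i ≤ n : θ_i = −1}, x₊ = ∑_{i∈A₊} 2^i e_i, x₋ = ∑_{i∈A₋} 2^i e_i. Then any norm-one functional F ∈ X* with F(T(x₊)) − F(T(x₋)) = ∑_{i=1}^n 2^i satisfies F(2^{-j}T(2^j e_j)) = θ_j for every j ≤ n. -/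
/-!
Since `‖F‖ ≤ 1` and `‖T x₊‖ + ‖T x₋‖ = ∑ 2^i`, the hypothesis on `F` forces
`F (T x₊) = ‖T x₊‖` and `F (T x₋) = -‖T x₋‖`. A functional of norm at most one that norms `y`
norms every `z` with `‖z‖ + ‖y - z‖ = ‖y‖`, and an isometry fixing `0` preserves this relation.
As `2^j e_j` is in this relation with `x₊` for `j ∈ A₊` (with `x₋` for `j ∈ A₋`), we get
`F (T (2^j e_j)) = ±2^j`.
-/

open Finset

namespace ContinuousLinearMap

variable {E : Type*} [SeminormedAddCommGroup E] [NormedSpace ℝ E] {F : E →L[ℝ] ℝ}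

lemma apply_le_norm_of_norm_le_one (hF : ‖F‖ ≤ 1) (x : E) : F x ≤ ‖x‖ :=
  (Real.le_norm_self _).trans (F.le_of_opNorm_le hF x |>.trans_eq (one_mul _))

lemma apply_eq_norm_of_sub_eq_norm_add_norm (hF : ‖F‖ ≤ 1) {y w : E}
    (h : F y - F w = ‖y‖ + ‖w‖) : F y = ‖y‖ ∧ F w = -‖w‖ := by
  have hy := apply_le_norm_of_norm_le_one hF y
  have hw := apply_le_norm_of_norm_le_one hF (-w)
  rw [map_neg, norm_neg] at hw
  constructor <;> linarith

lemma apply_eq_norm_of_norm_add_norm_sub_eq (hF : ‖F‖ ≤ 1) {y z : E} (hy : F y = ‖y‖)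
    (hz : ‖z‖ + ‖y - z‖ = ‖y‖) : F z = ‖z‖ := by
  have hz_le := apply_le_norm_of_norm_le_one hF z
  have hyz_le := apply_le_norm_of_norm_le_one hF (y - z)
  rw [map_sub] at hyz_le
  linarith

end ContinuousLinearMap

section IsometricOn

variable {E X : Type*} [SeminormedAddCommGroup E] [SeminormedAddCommGroup X] {S : Set E}
  {T : E → X}

lemma norm_apply_eq_of_dist_eq_on (hT : ∀ x y, x ∈ S → y ∈ S → dist (T x) (T y) = dist x y)
    (h0 : 0 ∈ S) (hT0 : T 0 = 0) {x : E} (hx : x ∈ S) : ‖T x‖ = ‖x‖ := by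
  simpa [hT0] using hT x 0 hx h0

lemma norm_add_norm_sub_apply_eq_of_dist_eq_on
    (hT : ∀ x y, x ∈ S → y ∈ S → dist (T x) (T y) = dist x y) (h0 : 0 ∈ S) (hT0 : T 0 = 0)
    {y z : E} (hy : y ∈ S) (hz : z ∈ S) (h : ‖z‖ + ‖y - z‖ = ‖y‖) :
    ‖T z‖ + ‖T y - T z‖ = ‖T y‖ := by
  rw [norm_apply_eq_of_dist_eq_on hT h0 hT0 hy, norm_apply_eq_of_dist_eq_on hT h0 hT0 hz,
    ← dist_eq_norm, hT y z hy hz, dist_eq_norm, h]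

end IsometricOn

noncomputable def dyadicPoint (A : Finset ℕ) : lp (fun _ : ℕ => ℝ) 1 :=
  ∑ i ∈ A, (2 : ℝ) ^ i • lp.single 1 i (1 : ℝ)

def dyadicSet : Set (lp (fun _ : ℕ => ℝ) 1) :=
  {x | ∃ A, x = dyadicPoint A}

lemma zero_mem_dyadicSet : (0 : lp (fun _ : ℕ => ℝ) 1) ∈ dyadicSet :=
  ⟨∅, (sum_empty).symm⟩

lemma dyadicPoint_mem_dyadicSet (A : Finset ℕ) : dyadicPoint A ∈ dyadicSet :=
  ⟨A, rfl⟩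

lemma dyadicPoint_singleton (j : ℕ) : dyadicPoint {j} = (2 : ℝ) ^ j • lp.single 1 j (1 : ℝ) :=
  sum_singleton _ _

lemma norm_dyadicPoint (A : Finset ℕ) : ‖dyadicPoint A‖ = ∑ i ∈ A, (2 : ℝ) ^ i := by
  have h := lp.norm_sum_single (E := fun _ : ℕ => ℝ) (p := 1) one_pos (fun i => (2 : ℝ) ^ i) A
  simp only [ENNReal.toReal_one, Real.rpow_one, Real.norm_eq_abs, abs_pow, abs_two] at h
  simpa [dyadicPoint, ← lp.single_smul] using h

lemma dyadicPoint_sub_singleton {A : Finset ℕ} {j : ℕ} (hj : j ∈ A) :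
    dyadicPoint A - dyadicPoint {j} = dyadicPoint (A.erase j) := by
  rw [sub_eq_iff_eq_add', dyadicPoint, dyadicPoint, dyadicPoint, sum_singleton]
  exact (add_sum_erase _ _ hj).symm

lemma norm_dyadicPoint_singleton_add_norm_sub {A : Finset ℕ} {j : ℕ} (hj : j ∈ A) :
    ‖dyadicPoint {j}‖ + ‖dyadicPoint A - dyadicPoint {j}‖ = ‖dyadicPoint A‖ := by
  rw [dyadicPoint_sub_singleton hj, norm_dyadicPoint, norm_dyadicPoint, norm_dyadicPoint,
    sum_singleton, add_sum_erase _ _ hj]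

section IsometricEmbedding

variable {X : Type*} [SeminormedAddCommGroup X] {T : lp (fun _ : ℕ => ℝ) 1 → X}

lemma norm_apply_dyadicPoint
    (hT : ∀ x y, x ∈ dyadicSet → y ∈ dyadicSet → dist (T x) (T y) = dist x y) (hT0 : T 0 = 0)
    (A : Finset ℕ) : ‖T (dyadicPoint A)‖ = ∑ i ∈ A, (2 : ℝ) ^ i := by
  rw [norm_apply_eq_of_dist_eq_on hT zero_mem_dyadicSet hT0 (dyadicPoint_mem_dyadicSet A),
    norm_dyadicPoint]

lemma apply_dyadicPoint_singleton_eq [NormedSpace ℝ X]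
    (hT : ∀ x y, x ∈ dyadicSet → y ∈ dyadicSet → dist (T x) (T y) = dist x y) (hT0 : T 0 = 0)
    {F : X →L[ℝ] ℝ} (hF : ‖F‖ ≤ 1) {A : Finset ℕ}
    (hA : F (T (dyadicPoint A)) = ‖T (dyadicPoint A)‖) {j : ℕ} (hj : j ∈ A) :
    F (T (dyadicPoint {j})) = 2 ^ j := by
  have hgeod := norm_add_norm_sub_apply_eq_of_dist_eq_on hT zero_mem_dyadicSet hT0
    (dyadicPoint_mem_dyadicSet A) (dyadicPoint_mem_dyadicSet {j})
    (norm_dyadicPoint_singleton_add_norm_sub hj)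
  rw [F.apply_eq_norm_of_norm_add_norm_sub_eq hF hA hgeod, norm_apply_dyadicPoint hT hT0,
    sum_singleton]

end IsometricEmbedding

lemma dyadicPoint_map_valEmbedding {n : ℕ} (s : Finset (Fin n)) :
    dyadicPoint (s.map Fin.valEmbedding) =
      ∑ i ∈ s, (2 : ℝ) ^ (i : ℕ) • lp.single 1 (i : ℕ) (1 : ℝ) :=
  sum_map _ _ _

lemma sum_filter_eq_one_add_sum_filter_eq_neg_one {ι M : Type*} [AddCommMonoid M]
    {θ : ι → ℝ} (hθ : ∀ i, θ i = 1 ∨ θ i = -1) (s : Finset ι) (f : ι → M) :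
    ∑ i ∈ s.filter (θ · = 1), f i + ∑ i ∈ s.filter (θ · = -1), f i = ∑ i ∈ s, f i := by
  classical
  rw [filter_congr (p := (θ · = -1)) (q := (¬ θ · = 1))
    fun i _ => by rcases hθ i with h | h <;> norm_num [h]]
  exact sum_filter_add_sum_filter_not _ _ _

theorem stmt17_general {X : Type*} [NormedAddCommGroup X] [NormedSpace ℝ X]
    (T : lp (fun _ : ℕ => ℝ) 1 → X)
    (hT : ∀ x y : lp (fun _ : ℕ => ℝ) 1,
      (∃ A : Finset ℕ, x = ∑ i ∈ A, (2 : ℝ) ^ i • lp.single 1 i (1 : ℝ)) →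
      (∃ A : Finset ℕ, y = ∑ i ∈ A, (2 : ℝ) ^ i • lp.single 1 i (1 : ℝ)) →
      dist (T x) (T y) = dist x y)
    (hT0 : T 0 = 0)
    (n : ℕ) (θ : Fin n → ℝ) (hθ : ∀ i, θ i = 1 ∨ θ i = -1)
    (F : X →L[ℝ] ℝ) (hF : ‖F‖ = 1)
    (hFval :
      F (T (∑ i ∈ Finset.univ.filter fun i : Fin n => θ i = 1,
          (2 : ℝ) ^ (i : ℕ) • lp.single 1 (i : ℕ) (1 : ℝ))) -
      F (T (∑ i ∈ Finset.univ.filter fun i : Fin n => θ i = -1,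
          (2 : ℝ) ^ (i : ℕ) • lp.single 1 (i : ℕ) (1 : ℝ))) =
        ∑ i : Fin n, (2 : ℝ) ^ (i : ℕ)) :
    ∀ j : Fin n,
      F (((2 : ℝ) ^ (j : ℕ))⁻¹ • T ((2 : ℝ) ^ (j : ℕ) • lp.single 1 (j : ℕ) (1 : ℝ))) =
        θ j := by
  have hT' : ∀ x y, x ∈ dyadicSet → y ∈ dyadicSet → dist (T x) (T y) = dist x y := hT
  set Ap := (univ.filter fun i : Fin n => θ i = 1).map Fin.valEmbedding
  set Am := (univ.filter fun i : Fin n => θ i = -1).map Fin.valEmbedding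
  have hsum : ∑ i : Fin n, (2 : ℝ) ^ (i : ℕ) = ‖T (dyadicPoint Ap)‖ + ‖T (dyadicPoint Am)‖ := by
    rw [norm_apply_dyadicPoint hT' hT0, norm_apply_dyadicPoint hT' hT0, sum_map, sum_map]
    exact (sum_filter_eq_one_add_sum_filter_eq_neg_one hθ _ _).symm
  rw [← dyadicPoint_map_valEmbedding, ← dyadicPoint_map_valEmbedding, hsum] at hFval
  obtain ⟨hFp, hFm⟩ := F.apply_eq_norm_of_sub_eq_norm_add_norm hF.le hFval
  intro j
  have hj_mem : ∀ c, θ j = c → (j : ℕ) ∈ (univ.filter (θ · = c)).map Fin.valEmbedding :=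
    fun c hc => mem_map_of_mem _ (mem_filter.2 ⟨mem_univ j, hc⟩)
  rw [map_smul, smul_eq_mul, ← dyadicPoint_singleton, inv_mul_eq_iff_eq_mul₀ (by positivity)]
  rcases hθ j with hj | hj
  · rw [apply_dyadicPoint_singleton_eq hT' hT0 hF.le hFp (hj_mem _ hj), hj, mul_one]
  · have hFj := apply_dyadicPoint_singleton_eq hT' hT0 (F := -F) (by rw [norm_neg, hF])
      (by rw [neg_apply, hFm, neg_neg]) (hj_mem _ hj)
    rw [neg_apply, neg_eq_iff_eq_neg] at hFj
    rw [hFj, hj, mul_neg_one]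

/-- With `M = {∑_{i∈A} 2^i e_i : A ⊂ ℕ finite} ⊂ ℓ₁`, `T : M → X` an
isometric embedding with `T 0 = 0`, a sign pattern `θ : Fin n → {−1, +1}`,
`x₊ = ∑_{θ i = 1} 2^i e_i` and `x₋ = ∑_{θ i = −1} 2^i e_i`: every norm-one functional
`F ∈ X*` with `F(T x₊) − F(T x₋) = ∑_{i<n} 2^i` satisfies
`F(2^{-j} T(2^j e_j)) = θ j` for every `j < n`. -/
theorem stmt17 {X : Type*} [NormedAddCommGroup X] [NormedSpace ℝ X] [CompleteSpace X]
    (T : lp (fun _ : ℕ => ℝ) 1 → X)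
    (hT : ∀ x y : lp (fun _ : ℕ => ℝ) 1,
      (∃ A : Finset ℕ, x = ∑ i ∈ A, (2 : ℝ) ^ i • lp.single 1 i (1 : ℝ)) →
      (∃ A : Finset ℕ, y = ∑ i ∈ A, (2 : ℝ) ^ i • lp.single 1 i (1 : ℝ)) →
      dist (T x) (T y) = dist x y)
    (hT0 : T 0 = 0)
    (n : ℕ) (θ : Fin n → ℝ) (hθ : ∀ i, θ i = 1 ∨ θ i = -1)
    (F : X →L[ℝ] ℝ) (hF : ‖F‖ = 1)
    (hFval :
      F (T (∑ i ∈ Finset.univ.filter fun i : Fin n => θ i = 1,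
          (2 : ℝ) ^ (i : ℕ) • lp.single 1 (i : ℕ) (1 : ℝ))) -
      F (T (∑ i ∈ Finset.univ.filter fun i : Fin n => θ i = -1,
          (2 : ℝ) ^ (i : ℕ) • lp.single 1 (i : ℕ) (1 : ℝ))) =
        ∑ i : Fin n, (2 : ℝ) ^ (i : ℕ)) :
    ∀ j : Fin n,
      F (((2 : ℝ) ^ (j : ℕ))⁻¹ • T ((2 : ℝ) ^ (j : ℕ) • lp.single 1 (j : ℕ) (1 : ℝ))) =
        θ j :=
  stmt17_general T hT hT0 n θ hθ F hF hFval
end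

section
/- Let M = ℕ with metric d(i,j) = h(min{i,j}) for i ≠ j, where h: ℕ → (1,2) is strictly increasing, and consider f ∈ TP(M) with median m of its support (i.e., ∑_{i=1}^m |f_i| ≥ ‖f‖₁/2 and ∑_{i=1}^{m−1} |f_i| < ‖f‖₁/2). Then the transportation cost norm of f equals ∑_{i=1}^{m−1} |f_i| h(i) + (‖f‖₁/2 − ∑_{i=1}^{m−1} |f_i|) h(m). -/
/-!
Put `ψ i = h (min i m) - h m / 2`. For monotone `h` one has `ψ i + ψ j ≤ h (min i j)`, with
equality as soon as `m` lies between `i` and `j`, and the right-hand side of the theorem is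
`∑ |f i| ψ i`. The potential `sign f · ψ` is 1-Lipschitz and attains this value.

Conversely, the median conditions allow splitting `f` into two zero-sum pieces without
cancellation, each of which is positive only on one side of `m` and negative only on the other
(the mass at `m` is shared between them). For such a piece `g` and 1-Lipschitz `l`, every positive
entry `i` and negative entry `j` of `g` satisfy `l i - l j ≤ ψ i + ψ j`, so some constant `β`
separates `l - ψ` on the positive entries from `l + ψ` on the negative ones; shifting `l` by `β`
bounds `∑ l g` termwise by `∑ |g| ψ`.
-/

open Finset

lemma exists_forall_le_of_forall_le {ι : Type*} (s t : Finset ι) (u v : ι → ℝ)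
    (huv : ∀ i ∈ s, ∀ j ∈ t, u i ≤ v j) :
    ∃ β : ℝ, (∀ i ∈ s, u i ≤ β) ∧ ∀ j ∈ t, β ≤ v j := by
  rcases s.eq_empty_or_nonempty with rfl | hs
  · obtain ⟨β, hβ⟩ := (t.image v).bddBelow
    exact ⟨β, by simp, fun j hj => hβ (mem_coe.2 (mem_image_of_mem v hj))⟩
  · exact ⟨s.sup' hs u, fun i hi => le_sup' u hi,
      fun j hj => sup'_le hs u fun i hi => huv i hi j hj⟩

theorem sum_mul_le_sum_abs_mul {ι : Type*} (S : Finset ι) (g l c : ι → ℝ)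
    (hg : ∑ i ∈ S, g i = 0)
    (hlc : ∀ i ∈ S, ∀ j ∈ S, 0 < g i → g j < 0 → l i - l j ≤ c i + c j) :
    ∑ i ∈ S, l i * g i ≤ ∑ i ∈ S, |g i| * c i := by
  obtain ⟨β, hpos, hneg⟩ := exists_forall_le_of_forall_le (S.filter (0 < g ·))
    (S.filter (g · < 0)) (fun i => l i - c i) (fun j => l j + c j) fun i hi j hj => by
      simp only [mem_filter] at hi hj
      linarith [hlc i hi.1 j hj.1 hi.2 hj.2]
  have hshift : ∑ i ∈ S, l i * g i = ∑ i ∈ S, (l i - β) * g i := by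
    simp only [sub_mul, sum_sub_distrib, ← mul_sum, hg, mul_zero, sub_zero]
  rw [hshift]
  refine sum_le_sum fun i hi => ?_
  rcases lt_trichotomy (g i) 0 with hgi | hgi | hgi
  · have := hneg i (mem_filter.2 ⟨hi, hgi⟩)
    rw [abs_of_neg hgi]; nlinarith
  · simp [hgi]
  · have := hpos i (mem_filter.2 ⟨hi, hgi⟩)
    rw [abs_of_pos hgi]; nlinarith

lemma sum_min_zero_eq {ι : Type*} (S : Finset ι) (f : ι → ℝ) (hf : ∑ i ∈ S, f i = 0) :
    ∑ i ∈ S, min (f i) 0 = -(∑ i ∈ S, |f i|) / 2 := by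
  have hmin : ∀ x : ℝ, min x 0 = (x - |x|) / 2 := fun x => by
    rcases le_total x 0 with hx | hx
    · rw [min_eq_left hx, abs_of_nonpos hx]; ring
    · rw [min_eq_right hx, abs_of_nonneg hx]; ring
  simp only [hmin, ← sum_div, sum_sub_distrib, hf, zero_sub]

lemma abs_min_zero_add_add_abs_sub {x r : ℝ} (h0 : 0 ≤ r) (h1 : r ≤ |x|) :
    |min x 0 + r| + |x - (min x 0 + r)| = |x| := by
  rcases le_total x 0 with hx | hx
  · rw [abs_of_nonpos hx] at h1
    rw [min_eq_left hx, abs_of_nonpos (by linarith), abs_of_nonpos hx,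
      abs_of_nonpos (by linarith)]
    ring
  · rw [abs_of_nonneg hx] at h1
    rw [min_eq_right hx, zero_add, abs_of_nonneg h0, abs_of_nonneg hx,
      abs_of_nonneg (by linarith)]
    ring

lemma sum_sign_mul_mul_eq {ι : Type*} {S : Finset ι} (f c : ι → ℝ) :
    ∑ i ∈ S, SignType.sign (f i) * c i * f i = ∑ i ∈ S, |f i| * c i :=
  sum_congr rfl fun i _ => by rw [mul_right_comm, mul_comm _ (f i), self_mul_sign]

lemma sum_Iio_eq_sum_support_filter (f : ℕ →₀ ℝ) (m : ℕ) {F : ℕ → ℝ}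
    (hF : ∀ i, f i = 0 → F i = 0) :
    ∑ i ∈ Iio m, F i = ∑ i ∈ f.support with i < m, F i := by
  refine (sum_subset (fun i hi => mem_Iio.2 (mem_filter.1 hi).2) fun i hi hni => hF i ?_).symm
  by_contra hne
  exact hni (mem_filter.2 ⟨Finsupp.mem_support_iff.2 hne, mem_Iio.1 hi⟩)

def minDist (h : ℕ → ℝ) (i j : ℕ) : ℝ := if i = j then 0 else h (min i j)

noncomputable def medianPotential (h : ℕ → ℝ) (m i : ℕ) : ℝ := h (min i m) - h m / 2

section

variable {h : ℕ → ℝ} {m : ℕ}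

lemma medianPotential_add_of_mem_uIcc {i j : ℕ} (hm : m ∈ Set.uIcc i j) :
    medianPotential h m i + medianPotential h m j = h (min i j) := by
  rcases Set.mem_uIcc.1 hm with ⟨hi, hj⟩ | ⟨hj, hi⟩
  · simp only [medianPotential, min_eq_left hi, min_eq_right hj, min_eq_left (hi.trans hj)]
    ring
  · simp only [medianPotential, min_eq_left hj, min_eq_right hi, min_eq_right (hj.trans hi)]
    ring

lemma medianPotential_add_le (hmono : Monotone h) (i j : ℕ) :
    medianPotential h m i + medianPotential h m j ≤ h (min i j) := by
  wlog hij : i ≤ j generalizing i j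
  · simpa only [add_comm, min_comm] using this j i (le_of_not_ge hij)
  rw [min_eq_left hij]
  rcases le_total j m with hjm | hmj
  · have := hmono hjm
    simp only [medianPotential, min_eq_left hjm, min_eq_left (hij.trans hjm)]
    linarith
  · have := hmono (min_le_left i m)
    simp only [medianPotential, min_eq_right hmj]
    linarith

lemma medianPotential_nonneg (hh : ∀ n, h m ≤ 2 * h n) (i : ℕ) :
    0 ≤ medianPotential h m i := by
  have := hh (min i m)
  simp only [medianPotential]
  linarith

lemma abs_sign_mul_sub_le_minDist (hmono : Monotone h) (hh : ∀ n, h m ≤ 2 * h n)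
    (f : ℕ → ℝ) (i j : ℕ) :
    |SignType.sign (f i) * medianPotential h m i - SignType.sign (f j) * medianPotential h m j|
      ≤ minDist h i j := by
  have habs : ∀ k,
      |(SignType.sign (f k) : ℝ) * medianPotential h m k| ≤ medianPotential h m k := fun k => by
    rw [abs_mul, abs_of_nonneg (medianPotential_nonneg hh k)]
    refine mul_le_of_le_one_left (medianPotential_nonneg hh k) ?_
    rcases SignType.sign (f k) with _ | _ | _ <;> simp
  unfold minDist
  split_ifs with hij
  · simp [hij]
  · linarith [abs_sub (SignType.sign (f i) * medianPotential h m i)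
      (SignType.sign (f j) * medianPotential h m j), habs i, habs j,
      medianPotential_add_le (m := m) hmono i j]

lemma sub_le_medianPotential_add {l : ℕ → ℝ} (hl : ∀ i j, |l i - l j| ≤ minDist h i j)
    {i j : ℕ} (hij : i ≠ j) (hm : m ∈ Set.uIcc i j) :
    l i - l j ≤ medianPotential h m i + medianPotential h m j := by
  rw [medianPotential_add_of_mem_uIcc hm]
  simpa [minDist, hij] using (le_abs_self _).trans (hl i j)

end

noncomputable def medianSplit (f : ℕ → ℝ) (m : ℕ) (δ : ℝ) (i : ℕ) : ℝ :=
  min (f i) 0 + if i < m then |f i| else if i = m then δ else 0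

section

variable {f : ℕ → ℝ} {m : ℕ} {δ : ℝ}

lemma mem_uIcc_of_medianSplit {i j : ℕ} (hi : 0 < medianSplit f m δ i)
    (hj : medianSplit f m δ j < 0) : m ∈ Set.uIcc i j := by
  refine Set.mem_uIcc.2 (Or.inl ⟨le_of_not_gt fun hmi => ?_, le_of_not_gt fun hjm => ?_⟩)
  · simp [medianSplit, hmi.not_gt, hmi.ne'] at hi
  · simp only [medianSplit, hjm, if_true] at hj
    rcases le_total (f j) 0 with hf | hf
    · rw [min_eq_left hf, abs_of_nonpos hf] at hj; linarith
    · rw [min_eq_right hf, abs_of_nonneg hf] at hj; linarith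

lemma mem_uIcc_of_sub_medianSplit {i j : ℕ} (hi : 0 < f i - medianSplit f m δ i)
    (hj : f j - medianSplit f m δ j < 0) : m ∈ Set.uIcc i j := by
  refine Set.mem_uIcc.2 (Or.inr ⟨le_of_not_gt fun hjm => ?_, le_of_not_gt fun hmi => ?_⟩)
  · simp only [medianSplit, hjm.not_gt, hjm.ne', if_false, add_zero] at hj
    linarith [min_le_left (f j) 0]
  · simp only [medianSplit, hmi, if_true] at hi
    rcases le_total (f i) 0 with hf | hf
    · rw [min_eq_left hf, abs_of_nonpos hf] at hi; linarith
    · rw [min_eq_right hf, abs_of_nonneg hf] at hi; linarith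

lemma abs_medianSplit_add_abs_sub (hδ : 0 ≤ δ) (hδm : δ ≤ |f m|) (i : ℕ) :
    |medianSplit f m δ i| + |f i - medianSplit f m δ i| = |f i| := by
  refine abs_min_zero_add_add_abs_sub ?_ ?_ <;> split_ifs with _ him
  all_goals first | exact abs_nonneg _ | exact le_rfl | exact hδ | exact him ▸ hδm

lemma sum_medianSplit {S : Finset ℕ} (hmS : m ∈ S) :
    ∑ i ∈ S, medianSplit f m δ i =
      ∑ i ∈ S, min (f i) 0 + ∑ i ∈ S with i < m, |f i| + δ := by
  rw [add_assoc]
  simp only [medianSplit, sum_add_distrib]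
  rw [sum_ite, sum_ite_eq' _ _ (fun _ => δ), if_pos (mem_filter.2 ⟨hmS, lt_irrefl m⟩)]

end

theorem sum_mul_le_sum_abs_mul_medianPotential_of_mem_uIcc {S : Finset ℕ} {h g l : ℕ → ℝ}
    {m : ℕ} (hl : ∀ i j, |l i - l j| ≤ minDist h i j) (hg : ∑ i ∈ S, g i = 0)
    (hcross : ∀ i j, 0 < g i → g j < 0 → m ∈ Set.uIcc i j) :
    ∑ i ∈ S, l i * g i ≤ ∑ i ∈ S, |g i| * medianPotential h m i :=
  sum_mul_le_sum_abs_mul S g l _ hg fun i _ j _ hi hj =>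
    sub_le_medianPotential_add hl (by rintro rfl; linarith) (hcross i j hi hj)

theorem sum_mul_le_sum_abs_mul_medianPotential {S : Finset ℕ} {h f l : ℕ → ℝ} {m : ℕ}
    (hl : ∀ i j, |l i - l j| ≤ minDist h i j) (hmS : m ∈ S) (hf : ∑ i ∈ S, f i = 0)
    (hlo : ∑ i ∈ S with i < m, |f i| ≤ (∑ i ∈ S, |f i|) / 2)
    (hhi : (∑ i ∈ S, |f i|) / 2 ≤ ∑ i ∈ S with i < m, |f i| + |f m|) :
    ∑ i ∈ S, l i * f i ≤ ∑ i ∈ S, |f i| * medianPotential h m i := by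
  set g := medianSplit f m ((∑ i ∈ S, |f i|) / 2 - ∑ i ∈ S with i < m, |f i|)
  have hg : ∑ i ∈ S, g i = 0 := by
    rw [sum_medianSplit hmS, sum_min_zero_eq S f hf]; ring
  have hfg : ∑ i ∈ S, (f i - g i) = 0 := by rw [sum_sub_distrib, hf, hg, sub_zero]
  calc ∑ i ∈ S, l i * f i = ∑ i ∈ S, l i * g i + ∑ i ∈ S, l i * (f i - g i) := by
        rw [← sum_add_distrib]; simp only [mul_sub, add_sub_cancel]
    _ ≤ ∑ i ∈ S, |g i| * medianPotential h m i
          + ∑ i ∈ S, |f i - g i| * medianPotential h m i :=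
        add_le_add
          (sum_mul_le_sum_abs_mul_medianPotential_of_mem_uIcc hl hg
            fun _ _ => mem_uIcc_of_medianSplit)
          (sum_mul_le_sum_abs_mul_medianPotential_of_mem_uIcc hl hfg
            fun _ _ => mem_uIcc_of_sub_medianSplit)
    _ = ∑ i ∈ S, |f i| * medianPotential h m i := by
        rw [← sum_add_distrib]
        refine sum_congr rfl fun i _ => ?_
        rw [← add_mul, abs_medianSplit_add_abs_sub (by linarith) (by linarith)]

lemma sum_abs_mul_medianPotential (h : ℕ → ℝ) (f : ℕ →₀ ℝ) (m : ℕ) :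
    ∑ i ∈ f.support, |f i| * medianPotential h m i =
      ∑ i ∈ Iio m, |f i| * h i +
        ((∑ i ∈ f.support, |f i|) / 2 - ∑ i ∈ Iio m, |f i|) * h m := by
  have hlow :
      ∑ i ∈ f.support with i < m, |f i| * h (min i m) = ∑ i ∈ Iio m, |f i| * h i := by
    rw [sum_Iio_eq_sum_support_filter f m fun i hi => by rw [hi, abs_zero, zero_mul]]
    exact sum_congr rfl fun i hi => by rw [min_eq_left (mem_filter.1 hi).2.le]
  have hhigh : ∑ i ∈ f.support with ¬i < m, |f i| * h (min i m)
      = (∑ i ∈ f.support, |f i| - ∑ i ∈ Iio m, |f i|) * h m := by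
    rw [sum_Iio_eq_sum_support_filter f m fun i hi => by rw [hi, abs_zero],
      ← sum_filter_not_add_sum_filter f.support (· < m), add_sub_cancel_right, sum_mul]
    exact sum_congr rfl fun i hi => by rw [min_eq_right (not_lt.1 (mem_filter.1 hi).2)]
  simp only [medianPotential, mul_sub, sum_sub_distrib, ← sum_mul]
  rw [← sum_filter_add_sum_filter_not f.support (· < m), hlow, hhigh]
  ring

/-- For `M = ℕ` with metric `d(i,j) = h(min i j)` for `i ≠ j`
(`h : ℕ → (1,2)` strictly increasing), let `f ∈ TP(M)` and let `m` be the median of the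
support of `f`, i.e. `∑_{i ≤ m} |f i| ≥ ‖f‖₁/2` and `∑_{i < m} |f i| < ‖f‖₁/2`. Then the
transportation cost norm of `f` (expressed by Kantorovich duality as a supremum over
1-Lipschitz functions) equals
`∑_{i < m} |f i| h(i) + (‖f‖₁/2 − ∑_{i < m} |f i|) h(m)`. -/
theorem stmt19 (h : ℕ → ℝ) (hmono : StrictMono h) (hrange : ∀ n, 1 < h n ∧ h n < 2)
    (f : ℕ →₀ ℝ) (hf : f.sum (fun _ r => r) = 0) (m : ℕ)
    (hm1 : (∑ i ∈ f.support, |f i|) / 2 ≤ ∑ i ∈ Finset.Iic m, |f i|)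
    (hm2 : ∑ i ∈ Finset.Iio m, |f i| < (∑ i ∈ f.support, |f i|) / 2) :
    let D : ℕ → ℕ → ℝ := fun i j => if i = j then 0 else h (min i j)
    sSup {r : ℝ | ∃ l : ℕ → ℝ, (∀ i j, |l i - l j| ≤ D i j) ∧
        r = |f.sum fun i a => l i * a|} =
      ∑ i ∈ Finset.Iio m, |f i| * h i +
        ((∑ i ∈ f.support, |f i|) / 2 - ∑ i ∈ Finset.Iio m, |f i|) * h m := by
  intro D
  have hh : ∀ n, h m ≤ 2 * h n := fun n => by linarith [hrange m, hrange n]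
  have hIic : ∑ i ∈ Iic m, |f i| = ∑ i ∈ Iio m, |f i| + |f m| := by
    rw [← Iio_insert, sum_insert notMem_Iio_self, add_comm]
  have hIio := sum_Iio_eq_sum_support_filter f m (F := fun i => |f i|)
    fun i hi => by rw [hi, abs_zero]
  have hmS : m ∈ f.support := Finsupp.mem_support_iff.2 fun h0 => by
    rw [hIic, h0, abs_zero, add_zero] at hm1; linarith
  have hupper : ∀ l : ℕ → ℝ, (∀ i j, |l i - l j| ≤ minDist h i j) →
      ∑ i ∈ f.support, l i * f i ≤ ∑ i ∈ f.support, |f i| * medianPotential h m i :=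
    fun l hl => sum_mul_le_sum_abs_mul_medianPotential hl hmS hf (hIio ▸ hm2.le)
      (by rw [← hIio]; linarith)
  rw [← sum_abs_mul_medianPotential]
  refine IsGreatest.csSup_eq ⟨⟨fun i => SignType.sign (f i) * medianPotential h m i,
    abs_sign_mul_sub_le_minDist hmono.monotone hh f, ?_⟩, ?_⟩
  · rw [Finsupp.sum, sum_sign_mul_mul_eq, abs_of_nonneg (sum_nonneg fun i _ =>
      mul_nonneg (abs_nonneg _) (medianPotential_nonneg hh i))]
  · rintro r ⟨l, hl, rfl⟩
    have hneg := hupper (fun i => -l i) fun i j => by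
      rw [← abs_neg, neg_sub_neg, neg_sub]; exact hl i j
    simp only [neg_mul, sum_neg_distrib] at hneg
    show |∑ i ∈ f.support, l i * f i| ≤ _
    exact abs_le.2 ⟨by linarith, hupper l hl⟩
end
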